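/- arXiv:2206.03041 — 13 statements merged into one kernel-verified Lean document; each statement's English description precedes it below -/
import Mathlib

section
/- Let f : X → ℝ ∪ {+∞} be a μ_f-strongly convex proper lower semicontinuous function on a Hilbert space X, let τ > 0, p = prox_{τf}(x), p' = prox_{τf}(x'). Then (1 + 2τμ_f)‖p - p'‖² ≤ ‖x - x'‖² - ‖p - x - p' + x'‖². -/
open RealInnerProductSpace

/-- If `h` is convex and `p` minimizes `h + (c/2)‖·‖²` with `c ≥ 0`, then the
minimum inequality improves by `(c/2)‖u - p‖²`. -/
lemma strong_min_aux {X : Type*} [NormedAddCommGroup X] [InnerProductSpace ℝ X]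
    (h : X → ℝ) (c : ℝ) (hc : 0 ≤ c) (hconv : ConvexOn ℝ Set.univ h)
    (p : X) (hmin : ∀ u : X, h p + c / 2 * ‖p‖ ^ 2 ≤ h u + c / 2 * ‖u‖ ^ 2)
    (u : X) :
    h p + c / 2 * ‖p‖ ^ 2 + c / 2 * ‖u - p‖ ^ 2 ≤ h u + c / 2 * ‖u‖ ^ 2 := by
  have key : h p ≤ h u + c * ⟪p, u - p⟫ := by
    have hT : Filter.Tendsto (fun t : ℝ => h u + c * ⟪p, u - p⟫ + c / 2 * t * ‖u - p‖ ^ 2)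
        (nhdsWithin (0:ℝ) (Set.Ioi 0)) (nhds (h u + c * ⟪p, u - p⟫)) := by
      have hcont : Continuous fun t : ℝ => h u + c * ⟪p, u - p⟫ + c / 2 * t * ‖u - p‖ ^ 2 := by
        continuity
      have h0 : Filter.Tendsto (fun t : ℝ => h u + c * ⟪p, u - p⟫ + c / 2 * t * ‖u - p‖ ^ 2)
          (nhdsWithin (0:ℝ) (Set.Ioi 0))
          (nhds (h u + c * ⟪p, u - p⟫ + c / 2 * 0 * ‖u - p‖ ^ 2)) :=
        (hcont.tendsto 0).mono_left nhdsWithin_le_nhds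
      simpa using h0
    refine ge_of_tendsto hT ?_
    filter_upwards [Ioo_mem_nhdsGT_of_mem (Set.mem_Ico.mpr ⟨le_rfl, zero_lt_one⟩)] with t ht
    obtain ⟨ht0, ht1⟩ := ht
    have hcv := hconv.2 (Set.mem_univ p) (Set.mem_univ u)
      (by linarith : (0:ℝ) ≤ 1 - t) (le_of_lt ht0) (by ring)
    have hm := hmin ((1 - t) • p + t • u)
    have hq : (1 - t) • p + t • u = p + t • (u - p) := by
      rw [smul_sub]; module
    have hnorm : ‖p + t • (u - p)‖ ^ 2
        = ‖p‖ ^ 2 + 2 * t * ⟪p, u - p⟫ + t ^ 2 * ‖u - p‖ ^ 2 := by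
      rw [norm_add_sq_real, real_inner_smul_right, norm_smul]
      rw [mul_pow]
      simp [abs_of_pos ht0]
      ring
    rw [hq] at hcv
    rw [hq, hnorm] at hm
    simp only [smul_eq_mul] at hcv
    have h2 : t * h p ≤ t * (h u + c * ⟪p, u - p⟫ + c / 2 * t * ‖u - p‖ ^ 2) := by
      nlinarith [hm, hcv]
    exact le_of_mul_le_mul_left (by linarith) ht0
  have expand : ‖u‖ ^ 2 = ‖p‖ ^ 2 + 2 * ⟪p, u - p⟫ + ‖u - p‖ ^ 2 := by
    have := norm_add_sq_real p (u - p)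
    simpa using this
  nlinarith [key, expand, hc]

/-- Firm nonexpansiveness of the prox of a strongly convex function:
`(1 + 2 τ μ_f) ‖p - p'‖² ≤ ‖x - x'‖² - ‖p - x - p' + x'‖²`. -/
theorem stmt1
    {X : Type*} [NormedAddCommGroup X] [InnerProductSpace ℝ X] [CompleteSpace X]
    (f : X → ℝ) (μf τ : ℝ) (hμ : 0 ≤ μf) (hτ : 0 < τ)
    (hlsc : LowerSemicontinuous f)
    (hsc : ConvexOn ℝ Set.univ (fun x => f x - μf / 2 * ‖x‖ ^ 2))
    (x x' p p' : X)
    (hp : IsMinOn (fun u => f u + ‖x - u‖ ^ 2 / (2 * τ)) Set.univ p)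
    (hp' : IsMinOn (fun u => f u + ‖x' - u‖ ^ 2 / (2 * τ)) Set.univ p') :
    (1 + 2 * τ * μf) * ‖p - p'‖ ^ 2 ≤ ‖x - x'‖ ^ 2 - ‖p - x - p' + x'‖ ^ 2 := by
  have hτ' : τ ≠ 0 := hτ.ne'
  have hc : (0:ℝ) ≤ μf + 1 / τ := by positivity
  -- the affine part is convex
  have haff : ∀ z : X, ConvexOn ℝ Set.univ
      (fun u : X => (‖z‖ ^ 2 - 2 * ⟪z, u⟫) / (2 * τ)) := by
    intro z
    refine ⟨convex_univ, ?_⟩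
    intro a _ b _ s t hs ht hst
    apply le_of_eq
    simp only [inner_add_right, real_inner_smul_right, smul_eq_mul]
    linear_combination (-(‖z‖ ^ 2 / (2 * τ))) * hst
  have hconv : ∀ z : X, ConvexOn ℝ Set.univ
      (fun u : X => f u + ‖z - u‖ ^ 2 / (2 * τ) - (μf + 1 / τ) / 2 * ‖u‖ ^ 2) := by
    intro z
    have := hsc.add (haff z)
    convert this using 2 with u
    · rfl
    rw [norm_sub_sq_real]
    simp only [Pi.add_apply]
    field_simp
    ring
  have hmin1 : ∀ u : X,
      (f p + ‖x - p‖ ^ 2 / (2 * τ) - (μf + 1 / τ) / 2 * ‖p‖ ^ 2) + (μf + 1 / τ) / 2 * ‖p‖ ^ 2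
        ≤ (f u + ‖x - u‖ ^ 2 / (2 * τ) - (μf + 1 / τ) / 2 * ‖u‖ ^ 2)
          + (μf + 1 / τ) / 2 * ‖u‖ ^ 2 := by
    intro u
    have := hp (Set.mem_univ u)
    simp only [Set.mem_setOf_eq] at this
    linarith
  have hmin2 : ∀ u : X,
      (f p' + ‖x' - p'‖ ^ 2 / (2 * τ) - (μf + 1 / τ) / 2 * ‖p'‖ ^ 2) + (μf + 1 / τ) / 2 * ‖p'‖ ^ 2
        ≤ (f u + ‖x' - u‖ ^ 2 / (2 * τ) - (μf + 1 / τ) / 2 * ‖u‖ ^ 2)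
          + (μf + 1 / τ) / 2 * ‖u‖ ^ 2 := by
    intro u
    have := hp' (Set.mem_univ u)
    simp only [Set.mem_setOf_eq] at this
    linarith
  have key1 := strong_min_aux
    (fun u => f u + ‖x - u‖ ^ 2 / (2 * τ) - (μf + 1 / τ) / 2 * ‖u‖ ^ 2)
    (μf + 1 / τ) hc (hconv x) p hmin1 p'
  have key2 := strong_min_aux
    (fun u => f u + ‖x' - u‖ ^ 2 / (2 * τ) - (μf + 1 / τ) / 2 * ‖u‖ ^ 2)
    (μf + 1 / τ) hc (hconv x') p' hmin2 p
  have hrev : ‖p' - p‖ = ‖p - p'‖ := norm_sub_rev _ _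
  rw [hrev] at key1
  -- clean polynomial forms
  have k1 : f p * (2 * τ) + ‖x - p‖ ^ 2 + (τ * μf + 1) * ‖p - p'‖ ^ 2
      ≤ f p' * (2 * τ) + ‖x - p'‖ ^ 2 := by
    have := mul_le_mul_of_nonneg_right (by linarith [key1] :
      f p + ‖x - p‖ ^ 2 / (2 * τ) + (μf + 1 / τ) / 2 * ‖p - p'‖ ^ 2
        ≤ f p' + ‖x - p'‖ ^ 2 / (2 * τ)) (by positivity : (0:ℝ) ≤ 2 * τ)
    have e1 : (f p + ‖x - p‖ ^ 2 / (2 * τ) + (μf + 1 / τ) / 2 * ‖p - p'‖ ^ 2) * (2 * τ)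
        = f p * (2 * τ) + ‖x - p‖ ^ 2 + (τ * μf + 1) * ‖p - p'‖ ^ 2 := by
      field_simp
    have e2 : (f p' + ‖x - p'‖ ^ 2 / (2 * τ)) * (2 * τ)
        = f p' * (2 * τ) + ‖x - p'‖ ^ 2 := by
      field_simp
    rw [e1, e2] at this
    exact this
  have k2 : f p' * (2 * τ) + ‖x' - p'‖ ^ 2 + (τ * μf + 1) * ‖p - p'‖ ^ 2
      ≤ f p * (2 * τ) + ‖x' - p‖ ^ 2 := by
    have := mul_le_mul_of_nonneg_right (by linarith [key2] :
      f p' + ‖x' - p'‖ ^ 2 / (2 * τ) + (μf + 1 / τ) / 2 * ‖p - p'‖ ^ 2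
        ≤ f p + ‖x' - p‖ ^ 2 / (2 * τ)) (by positivity : (0:ℝ) ≤ 2 * τ)
    have e1 : (f p' + ‖x' - p'‖ ^ 2 / (2 * τ) + (μf + 1 / τ) / 2 * ‖p - p'‖ ^ 2) * (2 * τ)
        = f p' * (2 * τ) + ‖x' - p'‖ ^ 2 + (τ * μf + 1) * ‖p - p'‖ ^ 2 := by
      field_simp
    have e2 : (f p + ‖x' - p‖ ^ 2 / (2 * τ)) * (2 * τ)
        = f p * (2 * τ) + ‖x' - p‖ ^ 2 := by
      field_simp
    rw [e1, e2] at this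
    exact this
  have hexp : ‖x - p'‖ ^ 2 - ‖x - p‖ ^ 2 + ‖x' - p‖ ^ 2 - ‖x' - p'‖ ^ 2
      = 2 * ⟪x - x', p - p'⟫ := by
    simp only [norm_sub_sq_real, inner_sub_left, inner_sub_right]
    ring
  have main : (2 + 2 * τ * μf) * ‖p - p'‖ ^ 2 ≤ 2 * ⟪x - x', p - p'⟫ := by
    linarith [k1, k2, hexp]
  have hfinal : ‖p - x - p' + x'‖ ^ 2
      = ‖p - p'‖ ^ 2 - 2 * ⟪x - x', p - p'⟫ + ‖x - x'‖ ^ 2 := by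
    have he : p - x - p' + x' = (p - p') - (x - x') := by abel
    rw [he, norm_sub_sq_real, real_inner_comm]
  rw [hfinal]
  linarith [main]
end

section
/- Let f be a convex function on a Hilbert space with nonempty set of minimizers X*, and suppose that on a region R containing X* it holds f(x) ≥ min f + (μ/2) dist(x, X*)² for all x ∈ R. Then for all x ∈ R, inf_{g ∈ ∂f(x)} ‖g‖ ≥ (μ/2) dist(x, X*). -/
open RealInnerProductSpace

/-- Quadratic error bound implies lower bound on subgradient norms:
if `f(x) ≥ min f + (μ/2) dist(x, X*)²` on `R`, then every subgradient `g` of `f`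
at `x ∈ R` satisfies `‖g‖ ≥ (μ/2) dist(x, X*)`. -/
theorem stmt3
    {X : Type*} [NormedAddCommGroup X] [InnerProductSpace ℝ X] [CompleteSpace X]
    (f : X → ℝ) (μ : ℝ) (hμ : 0 ≤ μ)
    (hconv : ConvexOn ℝ Set.univ f) (hlsc : LowerSemicontinuous f)
    (Xstar : Set X) (hXstar : Xstar = {x | IsMinOn f Set.univ x})
    (hne : Xstar.Nonempty)
    (R : Set X) (hRX : Xstar ⊆ R)
    (xstar : X) (hx : xstar ∈ Xstar)
    (hqeb : ∀ x ∈ R, f xstar + μ / 2 * Metric.infDist x Xstar ^ 2 ≤ f x) :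
    ∀ x ∈ R, ∀ g : X, (∀ y : X, f x + ⟪g, y - x⟫ ≤ f y) →
      μ / 2 * Metric.infDist x Xstar ≤ ‖g‖ := by
  intro x hxR g hg
  set d := Metric.infDist x Xstar with hd
  have hd0 : 0 ≤ d := Metric.infDist_nonneg
  rcases eq_or_lt_of_le hd0 with h | h
  · rw [← h]
    simpa using norm_nonneg g
  -- key : μ/2 * d^2 ≤ ‖g‖ * d
  have key : μ / 2 * d ^ 2 ≤ ‖g‖ * d := by
    apply le_of_forall_pos_le_add
    intro ε hε
    have hε' : (0:ℝ) < ε / (‖g‖ + 1) := by positivity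
    obtain ⟨y, hy, hdy⟩ : ∃ y ∈ Xstar, dist x y < d + ε / (‖g‖ + 1) := by
      rw [← Metric.infDist_lt_iff hne]
      linarith
    have hfy : f y = f xstar := by
      rw [hXstar] at hy hx
      exact le_antisymm (hy (Set.mem_univ xstar)) (hx (Set.mem_univ y))
    have h1 : f x + ⟪g, y - x⟫ ≤ f xstar := by rw [← hfy]; exact hg y
    have h2 : f xstar + μ / 2 * d ^ 2 ≤ f x := hqeb x hxR
    have h3 : μ / 2 * d ^ 2 ≤ ⟪g, x - y⟫ := by
      have : ⟪g, x - y⟫ = -⟪g, y - x⟫ := by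
        rw [← inner_neg_right, neg_sub]
      linarith [this]
    have h4 : ⟪g, x - y⟫ ≤ ‖g‖ * dist x y := by
      calc ⟪g, x - y⟫ ≤ ‖g‖ * ‖x - y‖ := real_inner_le_norm g (x - y)
        _ = ‖g‖ * dist x y := by rw [dist_eq_norm]
    have h5 : ‖g‖ * dist x y ≤ ‖g‖ * (d + ε / (‖g‖ + 1)) :=
      mul_le_mul_of_nonneg_left hdy.le (norm_nonneg g)
    have h6 : ‖g‖ * (ε / (‖g‖ + 1)) ≤ ε := by
      rw [mul_div_assoc']
      rw [div_le_iff₀ (by positivity)]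
      nlinarith [norm_nonneg g]
    nlinarith
  have key' : μ / 2 * d * d ≤ ‖g‖ * d := by nlinarith
  exact (mul_le_mul_iff_of_pos_right h).mp key'
end

section
/- Let f be a convex function on a Hilbert space with minimizer set X*, and suppose for all x with f(x) ≤ f₀ we have inf_{g ∈ ∂f(x)} ‖g‖ ≥ η dist(x, X*). Then for all x with f(x) ≤ f₀, f(x) ≥ min f + (η/2) dist(x, X*)². -/
open RealInnerProductSpace Metric Filter

lemma prox_exists {X : Type*} [NormedAddCommGroup X] [InnerProductSpace ℝ X] [CompleteSpace X]
    (f : X → ℝ) (hconv : ConvexOn ℝ Set.univ f) (hlsc : LowerSemicontinuous f)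
    (fmin : ℝ) (hbd : ∀ y, fmin ≤ f y) (x : X) (c : ℝ) (hc : 0 < c) :
    ∃ p : X, ∀ y, f p + c * ‖p - x‖ ^ 2 ≤ f y + c * ‖y - x‖ ^ 2 := by
  set F : X → ℝ := fun y => f y + c * ‖y - x‖ ^ 2 with hF
  have hFbd : ∀ y, fmin ≤ F y := fun y => le_add_of_le_of_nonneg (hbd y) (by positivity)
  have hne : (Set.range F).Nonempty := ⟨F x, ⟨x, rfl⟩⟩
  have hbdd : BddBelow (Set.range F) := ⟨fmin, by rintro _ ⟨y, rfl⟩; exact hFbd y⟩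
  set m : ℝ := sInf (Set.range F) with hm
  -- key midpoint estimate
  have hmid : ∀ a b : X, m + c / 4 * ‖a - b‖ ^ 2 ≤ (F a + F b) / 2 := by
    intro a b
    have h1 : F ((1/2 : ℝ) • a + (1/2 : ℝ) • b) ≤ (F a + F b) / 2 - c / 4 * ‖a - b‖ ^ 2 := by
      have hcv := hconv.2 (Set.mem_univ a) (Set.mem_univ b)
        (by norm_num : (0:ℝ) ≤ 1/2) (by norm_num : (0:ℝ) ≤ 1/2) (by norm_num)
      have hpar : ‖((1/2 : ℝ) • a + (1/2 : ℝ) • b) - x‖ ^ 2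
          = (‖a - x‖ ^ 2 + ‖b - x‖ ^ 2) / 2 - ‖a - b‖ ^ 2 / 4 := by
        have e1 : ((1/2 : ℝ) • a + (1/2 : ℝ) • b) - x = (1/2 : ℝ) • ((a - x) + (b - x)) := by
          module
        have e2 : a - b = (a - x) - (b - x) := by abel
        rw [e1, e2, norm_smul, Real.norm_eq_abs, abs_of_nonneg (by norm_num : (0:ℝ) ≤ 1/2),
          mul_pow]
        have h1 := norm_add_sq_real (a - x) (b - x)
        have h2 := norm_sub_sq_real (a - x) (b - x)
        nlinarith [h1, h2]
      simp only [hF]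
      rw [hpar]
      simp only [smul_eq_mul] at hcv
      nlinarith [hcv]
    have h2 : m ≤ F ((1/2 : ℝ) • a + (1/2 : ℝ) • b) := csInf_le hbdd ⟨_, rfl⟩
    linarith
  -- minimizing sequence
  have hseq : ∀ n : ℕ, ∃ y : X, F y < m + 1 / (n + 1) := by
    intro n
    obtain ⟨r, ⟨y, rfl⟩, hr⟩ := Real.lt_sInf_add_pos hne (by positivity : (0:ℝ) < 1 / (n + 1))
    exact ⟨y, hr⟩
  choose u hu using hseq
  have hcauchy : CauchySeq u := by
    refine cauchySeq_of_le_tendsto_0 (fun N => Real.sqrt (4 / c * (1 / (N + 1)))) ?_ ?_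
    · intro n k N hn hk
      have h1 := hmid (u n) (u k)
      have h2 := hu n
      have h3 := hu k
      have hnN : 1 / ((n:ℝ) + 1) ≤ 1 / ((N:ℝ) + 1) := by
        apply one_div_le_one_div_of_le (by positivity)
        exact_mod_cast add_le_add_left (Nat.cast_le.2 hn) 1
      have hkN : 1 / ((k:ℝ) + 1) ≤ 1 / ((N:ℝ) + 1) := by
        apply one_div_le_one_div_of_le (by positivity)
        exact_mod_cast add_le_add_left (Nat.cast_le.2 hk) 1
      have hsq : ‖u n - u k‖ ^ 2 ≤ 4 / c * (1 / (N + 1)) := by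
        rw [div_mul_eq_mul_div, le_div_iff₀ hc]
        nlinarith
      rw [dist_eq_norm]
      calc ‖u n - u k‖ = Real.sqrt (‖u n - u k‖ ^ 2) := by
              rw [Real.sqrt_sq (norm_nonneg _)]
        _ ≤ Real.sqrt (4 / c * (1 / (N + 1))) := Real.sqrt_le_sqrt hsq
    · have h0 : Tendsto (fun N : ℕ => 4 / c * (1 / ((N:ℝ) + 1))) atTop (nhds 0) := by
        have := tendsto_one_div_add_atTop_nhds_zero_nat.const_mul (4 / c)
        simpa using this
      have := (Real.continuous_sqrt.tendsto' 0 0 (by simp)).comp h0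
      exact this
  obtain ⟨p, hp⟩ := cauchySeq_tendsto_of_complete hcauchy
  refine ⟨p, fun y => ?_⟩
  have hFp : F p ≤ m := by
    apply le_of_forall_pos_le_add
    intro ε hε
    have e1 : ∀ᶠ n in atTop, f p - ε / 3 < f (u n) := by
      have := hlsc p (f p - ε / 3) (by linarith)
      exact hp.eventually this
    have e2 : ∀ᶠ n in atTop, c * ‖p - x‖ ^ 2 < c * ‖u n - x‖ ^ 2 + ε / 3 := by
      have hcont : Tendsto (fun n => c * ‖u n - x‖ ^ 2 + ε / 3) atTop
          (nhds (c * ‖p - x‖ ^ 2 + ε / 3)) := by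
        have : Tendsto (fun n => u n - x) atTop (nhds (p - x)) := hp.sub_const x
        exact ((this.norm.pow 2).const_mul c).add_const _
      exact hcont.eventually (lt_mem_nhds (by linarith : c * ‖p - x‖ ^ 2 < c * ‖p - x‖ ^ 2 + ε / 3))
    have e3 : ∀ᶠ n : ℕ in atTop, (1 : ℝ) / (n + 1) < ε / 3 := by
      exact tendsto_one_div_add_atTop_nhds_zero_nat.eventually
        (gt_mem_nhds (by linarith : (0:ℝ) < ε / 3))
    obtain ⟨n, h1, h2, h3⟩ := (e1.and (e2.and e3)).exists
    have := hu n
    simp only [hF] at this ⊢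
    linarith
  calc F p ≤ m := hFp
    _ ≤ F y := csInf_le hbdd ⟨y, rfl⟩

lemma prox_subgrad {X : Type*} [NormedAddCommGroup X] [InnerProductSpace ℝ X]
    (f : X → ℝ) (hconv : ConvexOn ℝ Set.univ f) (x p : X) (c : ℝ) (hc : 0 < c)
    (hp : ∀ y, f p + c * ‖p - x‖ ^ 2 ≤ f y + c * ‖y - x‖ ^ 2) :
    ∀ y, f p + ⟪(2 * c) • (x - p), y - p⟫ ≤ f y := by
  intro y
  rw [real_inner_smul_left]
  have hip : ⟪x - p, y - p⟫ = -⟪p - x, y - p⟫ := by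
    rw [show x - p = -(p - x) by abel, inner_neg_left]
  rw [hip]
  apply le_of_forall_pos_le_add
  intro ε hε
  set ip : ℝ := ⟪p - x, y - p⟫ with hipdef
  set n2 : ℝ := ‖y - p‖ ^ 2 with hn2
  have hn2nn : 0 ≤ n2 := by positivity
  set t : ℝ := min 1 (ε / (c * n2 + 1)) with ht
  have ht0 : 0 < t := lt_min one_pos (by positivity)
  have ht1 : t ≤ 1 := min_le_left _ _
  have htε : c * t * n2 ≤ ε := by
    have h1 : t ≤ ε / (c * n2 + 1) := min_le_right _ _
    have h2 : t * (c * n2 + 1) ≤ ε := by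
      rw [← le_div_iff₀ (by positivity)]; exact h1
    nlinarith [mul_pos hc ht0]
  -- apply prox inequality at p + t • (y - p)
  have hI := hp (p + t • (y - p))
  have hcv : f (p + t • (y - p)) ≤ (1 - t) * f p + t * f y := by
    have e : p + t • (y - p) = (1 - t) • p + t • y := by module
    rw [e]
    have := hconv.2 (Set.mem_univ p) (Set.mem_univ y)
      (show (0:ℝ) ≤ 1 - t by linarith) ht0.le (show (1 - t) + t = 1 by ring)
    simpa using this
  have hnorm : ‖p + t • (y - p) - x‖ ^ 2 = ‖p - x‖ ^ 2 + 2 * (t * ip) + t ^ 2 * n2 := by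
    have e : p + t • (y - p) - x = (p - x) + t • (y - p) := by abel
    rw [e, norm_add_sq_real, real_inner_smul_right, norm_smul, mul_pow, Real.norm_eq_abs,
      sq_abs]
  rw [hnorm] at hI
  have key : t * f p ≤ t * (f y + 2 * c * ip + c * t * n2) := by nlinarith [hI, hcv]
  have key2 : f p ≤ f y + 2 * c * ip + c * t * n2 := (mul_le_mul_iff_right₀ ht0).mp key
  linarith

set_option maxHeartbeats 1000000 in
/-- Metric subregularity of the subgradient implies a quadratic error bound:
if every subgradient `g` of `f` at every `x` with `f x ≤ f₀` satisfies
`‖g‖ ≥ η dist(x, X*)`, then `f x ≥ min f + (η/2) dist(x, X*)²` whenever `f x ≤ f₀`. -/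
theorem stmt4
    {X : Type*} [NormedAddCommGroup X] [InnerProductSpace ℝ X] [CompleteSpace X]
    (f : X → ℝ) (η f₀ : ℝ) (hη : 0 < η)
    (hconv : ConvexOn ℝ Set.univ f) (hlsc : LowerSemicontinuous f)
    (Xstar : Set X) (hXstar : Xstar = {x | IsMinOn f Set.univ x})
    (hne : Xstar.Nonempty)
    (xstar : X) (hx : xstar ∈ Xstar) (hf₀ : f xstar < f₀)
    (hsub : ∀ x : X, f x ≤ f₀ → ∀ g : X, (∀ y : X, f x + ⟪g, y - x⟫ ≤ f y) →
      η * Metric.infDist x Xstar ≤ ‖g‖) :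
    ∀ x : X, f x ≤ f₀ → f xstar + η / 2 * Metric.infDist x Xstar ^ 2 ≤ f x := by
  have hmin : ∀ y, f xstar ≤ f y := by
    have := hXstar ▸ hx
    exact fun y => (isMinOn_iff.mp this) y (Set.mem_univ y)
  set S : Set ℝ := {α : ℝ | 0 ≤ α ∧ α ≤ η / 2 ∧
    ∀ z, f z ≤ f₀ → f xstar + α * Metric.infDist z Xstar ^ 2 ≤ f z} with hS
  have h0S : (0 : ℝ) ∈ S := ⟨le_refl 0, by linarith, fun z _ => by simpa using hmin z⟩
  have hSne : S.Nonempty := ⟨0, h0S⟩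
  have hbdd : BddAbove S := ⟨η / 2, fun α hα => hα.2.1⟩
  set β : ℝ := sSup S with hβ
  have hβ0 : 0 ≤ β := le_csSup hbdd h0S
  have hβη : β ≤ η / 2 := csSup_le hSne (fun α hα => hα.2.1)
  have hβS : β ∈ S := by
    refine ⟨hβ0, hβη, fun z hz => ?_⟩
    set d : ℝ := Metric.infDist z Xstar with hd
    have hdnn : 0 ≤ d := Metric.infDist_nonneg
    rcases eq_or_lt_of_le hdnn with h | h
    · rw [← h]; simpa using hmin z
    · have : β ≤ (f z - f xstar) / d ^ 2 := by
        apply csSup_le hSne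
        intro α hα
        rw [le_div_iff₀ (by positivity)]
        have := hα.2.2 z hz
        linarith
      rw [le_div_iff₀ (by positivity)] at this
      linarith
  -- improvement step
  have himp : ∀ α ∈ S, ∀ lam : ℝ, 0 < lam → α * (2 + η * lam) ≤ η →
      (α + η ^ 2 * lam) / (1 + η * lam) ^ 2 ∈ S := by
    intro α hα lam hlam hcon
    obtain ⟨hα0, hαη, hαs⟩ := hα
    have hden : (0 : ℝ) < (1 + η * lam) ^ 2 := by positivity
    refine ⟨by positivity, ?_, ?_⟩
    · rw [div_le_iff₀ hden]
      nlinarith [mul_nonneg (mul_nonneg hα0 hη.le) hlam.le,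
        mul_pos (mul_pos hη (mul_pos hη hη)) (mul_pos hlam hlam)]
    · intro z hz
      obtain ⟨p, hp⟩ := prox_exists f hconv hlsc (f xstar) hmin z (1 / (2 * lam))
        (by positivity)
      have hsg : ∀ y, f p + ⟪(2 * (1 / (2 * lam))) • (z - p), y - p⟫ ≤ f y :=
        prox_subgrad f hconv z p (1 / (2 * lam)) (by positivity) hp
      have h2c : 2 * (1 / (2 * lam)) = 1 / lam := by field_simp
      set g : X := (1 / lam) • (z - p) with hg
      have hsg' : ∀ y, f p + ⟪g, y - p⟫ ≤ f y := by rw [hg, ← h2c]; exact hsg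
      set s : ℝ := ‖z - p‖ with hs
      have hsnn : 0 ≤ s := norm_nonneg _
      have hfp : f p ≤ f z := by
        have h := hp z
        simp only [sub_self, norm_zero] at h
        have hcpos : (0:ℝ) < 1/(2*lam) := by positivity
        nlinarith [mul_nonneg hcpos.le (sq_nonneg ‖p - z‖)]
      have hfp₀ : f p ≤ f₀ := le_trans hfp hz
      set dp : ℝ := Metric.infDist p Xstar with hdp
      have hdpnn : 0 ≤ dp := Metric.infDist_nonneg
      have hgnorm : ‖g‖ = s / lam := by
        rw [hg, norm_smul, Real.norm_eq_abs, abs_of_pos (by positivity)]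
        ring
      have hsubreg : lam * η * dp ≤ s := by
        have := hsub p hfp₀ g hsg'
        rw [hgnorm] at this
        rw [show lam * η * dp = lam * (η * dp) by ring]
        calc lam * (η * dp) ≤ lam * (s / lam) := by
              apply mul_le_mul_of_nonneg_left this (le_of_lt hlam)
          _ = s := by field_simp
      have hdesc : f p + s ^ 2 / lam ≤ f z := by
        have := hsg' z
        rw [hg, real_inner_smul_left, real_inner_self_eq_norm_sq] at this
        calc f p + s ^ 2 / lam = f p + 1 / lam * ‖z - p‖ ^ 2 := by rw [hs]; ring
          _ ≤ f z := this
      have hqg : f xstar + α * dp ^ 2 ≤ f p := hαs p hfp₀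
      set d : ℝ := Metric.infDist z Xstar with hd
      have hdnn : 0 ≤ d := Metric.infDist_nonneg
      have htri : d ≤ dp + s := by
        have := Metric.infDist_le_infDist_add_dist (x := z) (y := p) (s := Xstar)
        rwa [dist_eq_norm, ← hs, ← hd, ← hdp] at this
      -- the algebraic inequality
      have hQ : 0 ≤ (s - lam * η * dp) *
          (s * (1 + 2 * η * lam - α * lam) + lam * (η - 2 * α - α * η * lam) * dp) := by
        apply mul_nonneg (by linarith)
        have hc1 : 0 ≤ 1 + 2 * η * lam - α * lam := by nlinarith
        have hc2 : 0 ≤ η - 2 * α - α * η * lam := by nlinarith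
        positivity
      have hd2 : d ^ 2 ≤ (dp + s) ^ 2 := by nlinarith
      have hcoef : (0:ℝ) ≤ (α + η ^ 2 * lam) * lam := by positivity
      have h7 : (α + η ^ 2 * lam) * lam * d ^ 2
          ≤ (α + η ^ 2 * lam) * lam * (dp + s) ^ 2 :=
        mul_le_mul_of_nonneg_left hd2 hcoef
      have h8 : (α + η ^ 2 * lam) * lam * (dp + s) ^ 2
          ≤ (α * lam * dp ^ 2 + s ^ 2) * (1 + η * lam) ^ 2 := by linarith [hQ]
      have hgoal : (α + η ^ 2 * lam) * lam * d ^ 2 ≤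
          (α * lam * dp ^ 2 + s ^ 2) * (1 + η * lam) ^ 2 := h7.trans h8
      have hdesc' : s ^ 2 ≤ (f z - f p) * lam := by
        rw [← div_le_iff₀ hlam]; linarith
      have hqg' : α * lam * dp ^ 2 ≤ (f p - f xstar) * lam := by
        have := mul_le_mul_of_nonneg_right
          (show α * dp ^ 2 ≤ f p - f xstar by linarith) hlam.le
        linarith [this]
      have h4 : α * lam * dp ^ 2 + s ^ 2 ≤ lam * (f z - f xstar) := by linarith
      have h5 : (α * lam * dp ^ 2 + s ^ 2) * (1 + η * lam) ^ 2
          ≤ lam * (f z - f xstar) * (1 + η * lam) ^ 2 :=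
        mul_le_mul_of_nonneg_right h4 hden.le
      have h6 : lam * ((α + η ^ 2 * lam) * d ^ 2)
          ≤ lam * ((f z - f xstar) * (1 + η * lam) ^ 2) := by linarith [hgoal.trans h5]
      have hfin : (α + η ^ 2 * lam) * d ^ 2 ≤ (f z - f xstar) * (1 + η * lam) ^ 2 :=
        le_of_mul_le_mul_left h6 hlam
      rw [div_mul_eq_mul_div, ← le_sub_iff_add_le']
      exact (div_le_iff₀ hden).mpr hfin
  -- β must be η/2
  have hβeq : β = η / 2 := by
    by_contra hne'
    have hβlt : β < η / 2 := lt_of_le_of_ne hβη hne'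
    set lam : ℝ := (η - 2 * β) / (η * (β + 1)) with hlam
    have hlam0 : 0 < lam := by
      apply div_pos (by linarith) (by positivity)
    have hl : lam * (η * (β + 1)) = η - 2 * β := by
      rw [hlam]; field_simp
    have hβ1 : (0:ℝ) < β + 1 := by linarith
    have hcon : β * (2 + η * lam) ≤ η := by
      nlinarith [hl, hβ1, hβlt, mul_pos hβ1 hβ1]
    have hTS := himp β hβS lam hlam0 hcon
    have hTle : (β + η ^ 2 * lam) / (1 + η * lam) ^ 2 ≤ β := le_csSup hbdd hTS
    rw [div_le_iff₀ (by positivity)] at hTle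
    have hu : 0 < η * lam := mul_pos hη hlam0
    have hT2 : η - 2 * β ≤ β * (η * lam) := by
      nlinarith [hTle, hu, mul_pos hu hu]
    linarith [hl, hT2, hu]
  rw [← hβeq]
  exact hβS.2.2
end

section
/- Let τ, σ > 0 and define the weighted norm ‖(x,y)‖_V² = (1/τ)‖x‖² + (1/σ)‖y‖². Let Z* ⊆ X × Y be a nonempty closed convex set, A : X → Y a bounded linear operator with στ‖A‖² ≤ 1, and suppose z̄_{k+1} = (x̄_{k+1}, ȳ_{k+1}) and z_{k+1} = (x_{k+1}, y_{k+1}) satisfy x_{k+1} = x̄_{k+1} - τA^⊤(ȳ_{k+1} - y_k) and y_{k+1} = ȳ_{k+1}. Then for all α ∈ (0,1], dist_V(z̄_{k+1}, Z*)² ≥ (1-α) dist_V(z_{k+1}, Z*)² - (α^{-1} - 1)(1/σ)‖y_{k+1} - y_k‖². -/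
open RealInnerProductSpace

/-- Distance to a set in the weighted norm `‖(x,y)‖_V² = (1/τ)‖x‖² + (1/σ)‖y‖²`. -/
noncomputable def distV {X Y : Type*} [NormedAddCommGroup X] [NormedAddCommGroup Y]
    (τ σ : ℝ) (z : X × Y) (S : Set (X × Y)) : ℝ :=
  ⨅ w : S, Real.sqrt ((1 / τ) * ‖z.1 - (w : X × Y).1‖ ^ 2 +
    (1 / σ) * ‖z.2 - (w : X × Y).2‖ ^ 2)

/-- Weighted triangle-type inequality. -/
lemma weighted_tri (p q s t s' t' : ℝ) (hp : 0 ≤ p) (hq : 0 ≤ q)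
    (hs : 0 ≤ s) (ht : 0 ≤ t) (hs' : 0 ≤ s') (ht' : 0 ≤ t') :
    Real.sqrt (p * (s + s') ^ 2 + q * (t + t') ^ 2) ≤
      Real.sqrt (p * s ^ 2 + q * t ^ 2) + Real.sqrt (p * s' ^ 2 + q * t' ^ 2) := by
  set A := Real.sqrt (p * s ^ 2 + q * t ^ 2) with hAdef
  set B := Real.sqrt (p * s' ^ 2 + q * t' ^ 2) with hBdef
  have hA0 : 0 ≤ A := Real.sqrt_nonneg _
  have hB0 : 0 ≤ B := Real.sqrt_nonneg _
  have hAsq : A ^ 2 = p * s ^ 2 + q * t ^ 2 := by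
    rw [hAdef, Real.sq_sqrt]; positivity
  have hBsq : B ^ 2 = p * s' ^ 2 + q * t' ^ 2 := by
    rw [hBdef, Real.sq_sqrt]; positivity
  have hcs : (p * s * s' + q * t * t') ^ 2 ≤ A ^ 2 * B ^ 2 := by
    rw [hAsq, hBsq]; nlinarith [sq_nonneg (s * t' - s' * t), mul_nonneg hp hq]
  have hcs' : p * s * s' + q * t * t' ≤ A * B := by
    nlinarith [mul_nonneg hA0 hB0, mul_nonneg (mul_nonneg hp hs) hs',
      mul_nonneg (mul_nonneg hq ht) ht']
  have hle : p * (s + s') ^ 2 + q * (t + t') ^ 2 ≤ (A + B) ^ 2 := by nlinarith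
  calc Real.sqrt (p * (s + s') ^ 2 + q * (t + t') ^ 2)
      ≤ Real.sqrt ((A + B) ^ 2) := Real.sqrt_le_sqrt hle
    _ = A + B := Real.sqrt_sq (by positivity)

set_option maxHeartbeats 1000000 in
/-- Lemma relating the distance of `z̄_{k+1}` and `z_{k+1}` to the saddle set:
`dist_V(z̄_{k+1}, Z*)² ≥ (1-α) dist_V(z_{k+1}, Z*)² - (α⁻¹-1)(1/σ)‖y_{k+1} - y_k‖²`. -/
theorem stmt6
    {X Y : Type*} [NormedAddCommGroup X] [InnerProductSpace ℝ X] [CompleteSpace X]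
    [NormedAddCommGroup Y] [InnerProductSpace ℝ Y] [CompleteSpace Y]
    (τ σ : ℝ) (hτ : 0 < τ) (hσ : 0 < σ)
    (A : X →L[ℝ] Y) (hA : σ * τ * ‖A‖ ^ 2 ≤ 1)
    (Zstar : Set (X × Y)) (hne : Zstar.Nonempty) (hcl : IsClosed Zstar)
    (hcv : Convex ℝ Zstar)
    (xb x1 : X) (yb y1 yk : Y)
    (hx1 : x1 = xb - τ • (ContinuousLinearMap.adjoint A) (yb - yk))
    (hy1 : y1 = yb) :
    ∀ α : ℝ, 0 < α → α ≤ 1 →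
      (1 - α) * distV τ σ (x1, y1) Zstar ^ 2 - (α⁻¹ - 1) * (1 / σ) * ‖y1 - yk‖ ^ 2 ≤
        distV τ σ (xb, yb) Zstar ^ 2 := by
  intro α hα hα1
  have hZ : Nonempty Zstar := hne.to_subtype
  set c : ℝ := Real.sqrt ((1 / σ) * ‖y1 - yk‖ ^ 2) with hcdef
  have hc0 : 0 ≤ c := Real.sqrt_nonneg _
  have hcsq : c ^ 2 = (1 / σ) * ‖y1 - yk‖ ^ 2 := by
    rw [hcdef, Real.sq_sqrt]; positivity
  -- bound ‖x1 - xb‖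
  have hnormadj : ‖(ContinuousLinearMap.adjoint A) (yb - yk)‖ ≤ ‖A‖ * ‖yb - yk‖ := by
    calc ‖(ContinuousLinearMap.adjoint A) (yb - yk)‖
        ≤ ‖ContinuousLinearMap.adjoint A‖ * ‖yb - yk‖ :=
          (ContinuousLinearMap.adjoint A).le_opNorm _
      _ = ‖A‖ * ‖yb - yk‖ := by
          rw [ContinuousLinearMap.adjoint.norm_map]
  have hxdiff : ‖x1 - xb‖ ≤ τ * (‖A‖ * ‖y1 - yk‖) := by
    rw [hx1, hy1]
    calc ‖xb - τ • (ContinuousLinearMap.adjoint A) (yb - yk) - xb‖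
        = ‖τ • (ContinuousLinearMap.adjoint A) (yb - yk)‖ := by
          rw [sub_sub_cancel_left, norm_neg]
      _ = τ * ‖(ContinuousLinearMap.adjoint A) (yb - yk)‖ := by
          rw [norm_smul, Real.norm_eq_abs, abs_of_pos hτ]
      _ ≤ τ * (‖A‖ * ‖yb - yk‖) := by
          exact mul_le_mul_of_nonneg_left hnormadj hτ.le
  have hxsq : (1 / τ) * ‖x1 - xb‖ ^ 2 ≤ (1 / σ) * ‖y1 - yk‖ ^ 2 := by
    have h1 : ‖x1 - xb‖ ^ 2 ≤ (τ * (‖A‖ * ‖y1 - yk‖)) ^ 2 :=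
      pow_le_pow_left₀ (norm_nonneg _) hxdiff 2
    have h2 : σ * (τ * ‖A‖ ^ 2) ≤ 1 := by nlinarith
    have hu : (0:ℝ) ≤ 1 / σ := by positivity
    have hσ1 : σ * (1 / σ) = 1 := by field_simp
    have h3 : σ * τ * ‖A‖ ^ 2 * (τ * ‖y1 - yk‖ ^ 2) ≤ 1 * (τ * ‖y1 - yk‖ ^ 2) :=
      mul_le_mul_of_nonneg_right hA (mul_nonneg hτ.le (sq_nonneg _))
    rw [div_mul_eq_mul_div, one_mul, div_le_iff₀ hτ]
    nlinarith [mul_le_mul_of_nonneg_left h3 hu]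
  have hcbound : Real.sqrt ((1 / τ) * ‖x1 - xb‖ ^ 2) ≤ c :=
    Real.sqrt_le_sqrt hxsq
  -- pointwise triangle bound
  set f1 : Zstar → ℝ := fun w => Real.sqrt ((1 / τ) * ‖x1 - (w : X × Y).1‖ ^ 2 +
    (1 / σ) * ‖y1 - (w : X × Y).2‖ ^ 2) with hf1
  set fb : Zstar → ℝ := fun w => Real.sqrt ((1 / τ) * ‖xb - (w : X × Y).1‖ ^ 2 +
    (1 / σ) * ‖yb - (w : X × Y).2‖ ^ 2) with hfb
  have htri : ∀ w : Zstar, f1 w ≤ fb w + c := by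
    intro w
    have hnx : ‖x1 - (w : X × Y).1‖ ≤ ‖xb - (w : X × Y).1‖ + ‖x1 - xb‖ := by
      calc ‖x1 - (w : X × Y).1‖ = ‖(xb - (w : X × Y).1) + (x1 - xb)‖ := by
            congr 1; abel
        _ ≤ _ := norm_add_le _ _
    have step1 : f1 w ≤ Real.sqrt ((1 / τ) * (‖xb - (w : X × Y).1‖ + ‖x1 - xb‖) ^ 2 +
        (1 / σ) * (‖yb - (w : X × Y).2‖ + 0) ^ 2) := by
      apply Real.sqrt_le_sqrt
      have : ‖y1 - (w : X × Y).2‖ = ‖yb - (w : X × Y).2‖ := by rw [hy1]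
      rw [this]
      have hx2 : ‖x1 - (w : X × Y).1‖ ^ 2 ≤ (‖xb - (w : X × Y).1‖ + ‖x1 - xb‖) ^ 2 :=
        pow_le_pow_left₀ (norm_nonneg _) hnx 2
      have hτ' : (0:ℝ) ≤ 1 / τ := by positivity
      nlinarith
    have step2 : Real.sqrt ((1 / τ) * (‖xb - (w : X × Y).1‖ + ‖x1 - xb‖) ^ 2 +
        (1 / σ) * (‖yb - (w : X × Y).2‖ + 0) ^ 2) ≤ fb w +
          Real.sqrt ((1 / τ) * ‖x1 - xb‖ ^ 2 + (1 / σ) * 0 ^ 2) :=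
      weighted_tri (1 / τ) (1 / σ) _ _ _ _ (by positivity) (by positivity)
        (norm_nonneg _) (norm_nonneg _) (norm_nonneg _) le_rfl
    have step3 : Real.sqrt ((1 / τ) * ‖x1 - xb‖ ^ 2 + (1 / σ) * 0 ^ 2) ≤ c := by
      have : (1 / τ) * ‖x1 - xb‖ ^ 2 + (1 / σ) * 0 ^ 2 = (1 / τ) * ‖x1 - xb‖ ^ 2 := by ring
      rw [this]; exact hcbound
    calc f1 w ≤ _ := step1
      _ ≤ fb w + Real.sqrt ((1 / τ) * ‖x1 - xb‖ ^ 2 + (1 / σ) * 0 ^ 2) := step2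
      _ ≤ fb w + c := by linarith
  -- distances
  set D1 : ℝ := distV τ σ (x1, y1) Zstar with hD1def
  set Db : ℝ := distV τ σ (xb, yb) Zstar with hDbdef
  have hbdd1 : BddBelow (Set.range f1) :=
    ⟨0, by rintro _ ⟨w, rfl⟩; exact Real.sqrt_nonneg _⟩
  have hD1nonneg : 0 ≤ D1 := Real.iInf_nonneg fun w => Real.sqrt_nonneg _
  have hDbnonneg : 0 ≤ Db := Real.iInf_nonneg fun w => Real.sqrt_nonneg _
  have hD1le : D1 ≤ Db + c := by
    have h1 : ∀ w : Zstar, D1 - c ≤ fb w := by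
      intro w
      have : D1 ≤ f1 w := ciInf_le hbdd1 w
      linarith [htri w]
    have h2 : D1 - c ≤ Db := le_ciInf h1
    linarith
  -- final algebra
  have hD1sq : D1 ^ 2 ≤ (Db + c) ^ 2 := pow_le_pow_left₀ hD1nonneg hD1le 2
  have hinv : α * α⁻¹ = 1 := mul_inv_cancel₀ (ne_of_gt hα)
  have key : α * ((1 - α) * D1 ^ 2 - (α⁻¹ - 1) * (1 / σ) * ‖y1 - yk‖ ^ 2) ≤ α * Db ^ 2 := by
    rw [mul_assoc ((α⁻¹:ℝ) - 1), ← hcsq]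
    have hstep : α * ((1 - α) * D1 ^ 2 - (α⁻¹ - 1) * c ^ 2) =
        α * (1 - α) * D1 ^ 2 - (1 - α) * c ^ 2 := by
      field_simp
    rw [hstep]
    nlinarith [sq_nonneg (α * Db - (1 - α) * c),
      mul_le_mul_of_nonneg_left hD1sq (mul_nonneg hα.le (sub_nonneg.mpr hα1))]
  exact le_of_mul_le_mul_left key hα
end

section
/- Let L be a convex-concave Lagrangian with saddle point z* = (x*, y*), and let G_β(z; z*) = sup_{z'} [L(x, y') - L(x', y) - (β_x/(2τ))‖x' - x*‖² - (β_y/(2σ))‖y' - y*‖²] be the smoothed gap centered at z*. Then for any β_x, β_y ∈ [0, ∞), G_β(z; z*) ≥ 0 for all z, with G_β(z; z*) = 0 if and only if z is a saddle point of L. -/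
open RealInnerProductSpace

private lemma stmt7_aux (a c : ℝ) (hc : 0 ≤ c)
    (h : ∀ t : ℝ, 0 < t → t ≤ 1 → a ≤ c * t) : a ≤ 0 := by
  by_contra hpos
  push_neg at hpos
  have hc1 : 0 < c + 1 := by linarith
  have ht0 : 0 < min 1 (a / (c + 1)) := lt_min one_pos (div_pos hpos hc1)
  have h1 := h _ ht0 (min_le_left _ _)
  have h2 : min 1 (a / (c + 1)) ≤ a / (c + 1) := min_le_right _ _
  have h3 : min 1 (a / (c + 1)) * (c + 1) ≤ a := by
    have := mul_le_mul_of_nonneg_right h2 hc1.le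
    rwa [div_mul_cancel₀ a hc1.ne'] at this
  nlinarith [h1, h3, ht0]

set_option maxHeartbeats 1000000 in
/-- The smoothed gap centered at a saddle point `z*` is a measure of optimality:
it is nonnegative and vanishes exactly on the set of saddle points. -/
theorem stmt7
    {X Y : Type*} [NormedAddCommGroup X] [InnerProductSpace ℝ X] [CompleteSpace X]
    [NormedAddCommGroup Y] [InnerProductSpace ℝ Y] [CompleteSpace Y]
    (f f2 : X → ℝ) (gs g2s : Y → ℝ) (A : X →L[ℝ] Y)
    (hf : ConvexOn ℝ Set.univ f) (hflsc : LowerSemicontinuous f)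
    (hgs : ConvexOn ℝ Set.univ gs) (hgslsc : LowerSemicontinuous gs)
    (hf2 : ConvexOn ℝ Set.univ f2) (hf2d : Differentiable ℝ f2)
    (hg2 : ConvexOn ℝ Set.univ g2s) (hg2d : Differentiable ℝ g2s)
    (τ σ βx βy : ℝ) (hτ : 0 < τ) (hσ : 0 < σ) (hβx : 0 ≤ βx) (hβy : 0 ≤ βy)
    (L : X → Y → ℝ)
    (hL : ∀ x y, L x y = f x + f2 x + ⟪A x, y⟫ - gs y - g2s y)
    (Zstar : Set (X × Y))
    (hZ : Zstar = {z | ∀ (x : X) (y : Y), L z.1 y ≤ L z.1 z.2 ∧ L z.1 z.2 ≤ L x z.2})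
    (hne : Zstar.Nonempty)
    (zstar : X × Y) (hzs : zstar ∈ Zstar)
    (G : X × Y → ℝ)
    (hG : ∀ z : X × Y, IsLUB {v | ∃ (x' : X) (y' : Y),
      v = L z.1 y' - L x' z.2 - βx / (2 * τ) * ‖x' - zstar.1‖ ^ 2 -
        βy / (2 * σ) * ‖y' - zstar.2‖ ^ 2} (G z)) :
    ∀ z : X × Y, 0 ≤ G z ∧ (G z = 0 ↔ z ∈ Zstar) := by
  have hsz := hzs
  rw [hZ] at hsz
  simp only [Set.mem_setOf_eq] at hsz
  intro z
  obtain ⟨hub, hlub⟩ := hG z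
  -- the base element of the sup set, with x' = x*, y' = y*
  have hmem0 : L z.1 zstar.2 - L zstar.1 z.2 ∈ {v | ∃ (x' : X) (y' : Y),
      v = L z.1 y' - L x' z.2 - βx / (2 * τ) * ‖x' - zstar.1‖ ^ 2 -
        βy / (2 * σ) * ‖y' - zstar.2‖ ^ 2} := by
    exact ⟨zstar.1, zstar.2, by simp⟩
  have h1 : L zstar.1 z.2 ≤ L z.1 zstar.2 :=
    le_trans (hsz z.1 z.2).1 (hsz z.1 z.2).2
  have hGnn : 0 ≤ G z := le_trans (by linarith) (hub hmem0)
  refine ⟨hGnn, ?_, ?_⟩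
  · -- G z = 0 → z is a saddle point
    intro hG0
    have hveq : L z.1 zstar.2 = L zstar.1 z.2 := by
      have := hub hmem0
      rw [hG0] at this
      linarith
    -- key_y : L z.1 y ≤ L z.1 y* for all y
    have key_y : ∀ y : Y, L z.1 y ≤ L z.1 zstar.2 := by
      intro y
      have hc : 0 ≤ βy / (2 * σ) * ‖y - zstar.2‖ ^ 2 := by positivity
      have := stmt7_aux (L z.1 y - L z.1 zstar.2) _ hc ?_
      · linarith
      intro t ht0 ht1
      set y' := t • y + (1 - t) • zstar.2 with hy'
      have hmem : L z.1 y' - L zstar.1 z.2 - βx / (2 * τ) * ‖zstar.1 - zstar.1‖ ^ 2 -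
          βy / (2 * σ) * ‖y' - zstar.2‖ ^ 2 ∈ {v | ∃ (x' : X) (y' : Y),
          v = L z.1 y' - L x' z.2 - βx / (2 * τ) * ‖x' - zstar.1‖ ^ 2 -
            βy / (2 * σ) * ‖y' - zstar.2‖ ^ 2} := ⟨zstar.1, y', rfl⟩
      have hle := hub hmem
      rw [hG0] at hle
      have hnorm : ‖y' - zstar.2‖ ^ 2 = t ^ 2 * ‖y - zstar.2‖ ^ 2 := by
        have hd : y' - zstar.2 = t • (y - zstar.2) := by rw [hy']; module
        rw [hd, norm_smul, mul_pow, Real.norm_eq_abs, sq_abs]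
      have hgs' : gs y' ≤ t * gs y + (1 - t) * gs zstar.2 :=
        hgs.2 (Set.mem_univ _) (Set.mem_univ _) ht0.le (by linarith) (by ring)
      have hg2' : g2s y' ≤ t * g2s y + (1 - t) * g2s zstar.2 :=
        hg2.2 (Set.mem_univ _) (Set.mem_univ _) ht0.le (by linarith) (by ring)
      have hin : ⟪A z.1, y'⟫ = t * ⟪A z.1, y⟫ + (1 - t) * ⟪A z.1, zstar.2⟫ := by
        rw [hy', inner_add_right, real_inner_smul_right, real_inner_smul_right]
      have hLy' : t * L z.1 y + (1 - t) * L z.1 zstar.2 ≤ L z.1 y' := by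
        rw [hL z.1 y, hL z.1 zstar.2, hL z.1 y', hin]
        nlinarith [hgs', hg2']
      rw [hnorm] at hle
      simp only [sub_self, norm_zero] at hle
      have hz0 : L zstar.1 z.2 = L z.1 zstar.2 := hveq.symm
      nlinarith [hLy', hle, ht0]
    -- key_x : L x* z.2 ≤ L x z.2 for all x
    have key_x : ∀ x : X, L zstar.1 z.2 ≤ L x z.2 := by
      intro x
      have hc : 0 ≤ βx / (2 * τ) * ‖x - zstar.1‖ ^ 2 := by positivity
      have := stmt7_aux (L zstar.1 z.2 - L x z.2) _ hc ?_
      · linarith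
      intro t ht0 ht1
      set x' := t • x + (1 - t) • zstar.1 with hx'
      have hmem : L z.1 zstar.2 - L x' z.2 - βx / (2 * τ) * ‖x' - zstar.1‖ ^ 2 -
          βy / (2 * σ) * ‖zstar.2 - zstar.2‖ ^ 2 ∈ {v | ∃ (x' : X) (y' : Y),
          v = L z.1 y' - L x' z.2 - βx / (2 * τ) * ‖x' - zstar.1‖ ^ 2 -
            βy / (2 * σ) * ‖y' - zstar.2‖ ^ 2} := ⟨x', zstar.2, rfl⟩
      have hle := hub hmem
      rw [hG0] at hle
      have hnorm : ‖x' - zstar.1‖ ^ 2 = t ^ 2 * ‖x - zstar.1‖ ^ 2 := by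
        have hd : x' - zstar.1 = t • (x - zstar.1) := by rw [hx']; module
        rw [hd, norm_smul, mul_pow, Real.norm_eq_abs, sq_abs]
      have hfs' : f x' ≤ t * f x + (1 - t) * f zstar.1 :=
        hf.2 (Set.mem_univ _) (Set.mem_univ _) ht0.le (by linarith) (by ring)
      have hf2' : f2 x' ≤ t * f2 x + (1 - t) * f2 zstar.1 :=
        hf2.2 (Set.mem_univ _) (Set.mem_univ _) ht0.le (by linarith) (by ring)
      have hin : ⟪A x', z.2⟫ = t * ⟪A x, z.2⟫ + (1 - t) * ⟪A zstar.1, z.2⟫ := by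
        rw [hx', map_add, map_smul, map_smul, inner_add_left,
          real_inner_smul_left, real_inner_smul_left]
      have hLx' : L x' z.2 ≤ t * L x z.2 + (1 - t) * L zstar.1 z.2 := by
        rw [hL x z.2, hL zstar.1 z.2, hL x' z.2, hin]
        nlinarith [hfs', hf2']
      rw [hnorm] at hle
      simp only [sub_self, norm_zero] at hle
      nlinarith [hLx', hle, ht0]
    -- conclude z is a saddle point
    rw [hZ]
    intro x y
    have e1 : L z.1 z.2 ≤ L z.1 zstar.2 := key_y z.2
    have e2 : L zstar.1 z.2 ≤ L z.1 z.2 := key_x z.1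
    have e3 : L z.1 z.2 = L z.1 zstar.2 := le_antisymm e1 (by rw [hveq]; exact e2)
    constructor
    · rw [e3]; exact key_y y
    · rw [e3, hveq]; exact key_x x
  · -- z saddle point → G z = 0
    intro hzin
    rw [hZ] at hzin
    simp only [Set.mem_setOf_eq] at hzin
    have hub0 : (0 : ℝ) ∈ upperBounds {v | ∃ (x' : X) (y' : Y),
        v = L z.1 y' - L x' z.2 - βx / (2 * τ) * ‖x' - zstar.1‖ ^ 2 -
          βy / (2 * σ) * ‖y' - zstar.2‖ ^ 2} := by
      rintro v ⟨x', y', rfl⟩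
      have p1 : 0 ≤ βx / (2 * τ) * ‖x' - zstar.1‖ ^ 2 := by positivity
      have p2 : 0 ≤ βy / (2 * σ) * ‖y' - zstar.2‖ ^ 2 := by positivity
      have := (hzin x' y').1
      have := (hzin x' y').2
      linarith
    have := hlub hub0
    linarith
end

section
/- Suppose G_β(·, z*) has an η-quadratic error bound on the set {z : dist_V(z, Z*) < a}, i.e. G_β(z; z*) ≥ (η/2) dist_V(z, Z*)² there. Then for all M > 1, G_β(·, z*) has an (η/M)-quadratic error bound on {z : dist_V(z, Z*) < M a}. -/
/-- A local quadratic error bound extends to larger sets with a degraded constant: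
if `Φ ≥ (η/2) dist(·, Z*)²` on `{dist < a}`, then `Φ ≥ (η/M)/2 · dist(·, Z*)²` on
`{dist < M a}` for every `M > 1`. -/
theorem stmt9
    {Z : Type*} [NormedAddCommGroup Z] [InnerProductSpace ℝ Z] [CompleteSpace Z]
    (Φ : Z → ℝ) (hΦconv : ConvexOn ℝ Set.univ Φ) (hΦnonneg : ∀ z, 0 ≤ Φ z)
    (Zstar : Set Z) (hZ : Zstar = {z | Φ z = 0}) (hne : Zstar.Nonempty)
    (hcl : IsClosed Zstar) (hcv : Convex ℝ Zstar)
    (a η : ℝ) (ha : 0 < a) (hη : 0 < η)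
    (hqeb : ∀ z : Z, Metric.infDist z Zstar < a →
      η / 2 * Metric.infDist z Zstar ^ 2 ≤ Φ z) :
    ∀ M : ℝ, 1 < M → ∀ z : Z, Metric.infDist z Zstar < M * a →
      (η / M) / 2 * Metric.infDist z Zstar ^ 2 ≤ Φ z := by
  intro M hM z hz
  have hM0 : (0 : ℝ) < M := lt_trans one_pos hM
  -- nearest point p
  obtain ⟨p, hp, hdist⟩ := exists_norm_eq_iInf_of_complete_convex hne hcl.isComplete hcv z
  set d := Metric.infDist z Zstar with hd
  have hd0 : 0 ≤ d := Metric.infDist_nonneg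
  have hzp : ‖z - p‖ = d := by
    rw [hdist, hd, Metric.infDist_eq_iInf]
    simp_rw [dist_eq_norm]
  have hΦp : Φ p = 0 := by rw [hZ] at hp; exact hp
  -- the intermediate point
  set t : ℝ := 1 / M with ht
  have ht0 : 0 < t := by positivity
  have ht1 : t < 1 := by rw [ht]; exact (div_lt_one hM0).2 hM
  set w : Z := t • z + (1 - t) • p with hw
  have hwp : ‖w - p‖ = t * d := by
    have : w - p = t • (z - p) := by rw [hw]; module
    rw [this, norm_smul, Real.norm_eq_abs, abs_of_pos ht0, hzp]
  have hwz : dist z w = (1 - t) * d := by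
    have : z - w = (1 - t) • (z - p) := by rw [hw]; module
    rw [dist_eq_norm, this, norm_smul, Real.norm_eq_abs, abs_of_pos (by linarith), hzp]
  have hub : Metric.infDist w Zstar ≤ t * d := by
    rw [← hwp, ← dist_eq_norm]; exact Metric.infDist_le_dist_of_mem hp
  have hlb : t * d ≤ Metric.infDist w Zstar := by
    have h1 : Metric.infDist z Zstar ≤ Metric.infDist w Zstar + dist z w :=
      Metric.infDist_le_infDist_add_dist
    rw [hwz] at h1
    nlinarith
  have hlt : Metric.infDist w Zstar < a := by
    calc Metric.infDist w Zstar ≤ t * d := hub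
      _ < t * (M * a) := mul_lt_mul_of_pos_left hz ht0
      _ = a := by rw [ht]; field_simp
  have hΦw : η / 2 * Metric.infDist w Zstar ^ 2 ≤ Φ w := hqeb w hlt
  have hconv : Φ w ≤ t * Φ z + (1 - t) * Φ p :=
    hΦconv.2 (Set.mem_univ z) (Set.mem_univ p) (le_of_lt ht0) (by linarith) (by ring)
  have hsq : (t * d) ^ 2 ≤ Metric.infDist w Zstar ^ 2 := by
    have := Metric.infDist_nonneg (x := w) (s := Zstar)
    nlinarith
  have key : η / 2 * (t * d) ^ 2 ≤ t * Φ z := by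
    calc η / 2 * (t * d) ^ 2 ≤ η / 2 * Metric.infDist w Zstar ^ 2 := by nlinarith
      _ ≤ Φ w := hΦw
      _ ≤ t * Φ z + (1 - t) * Φ p := hconv
      _ = t * Φ z := by rw [hΦp]; ring
  have heq : η / 2 * (t * d) ^ 2 = t * ((η / M) / 2 * d ^ 2) := by
    simp only [ht]; field_simp
  rw [heq] at key
  exact (mul_le_mul_iff_right₀ ht0).1 key
end

section
/- Let G_β(z; ż) = sup_{z'} [L(x, y') - L(x', y) - (β/2)‖ż - z'‖_V²] for β ≥ 0 and let z* be the projection (in norm ‖·‖_V) of ż onto the saddle point set Z*. Then for all z, ż: G_β(z, ż) ≥ G_{2β}(z, z*) - β dist_V(ż, Z*)². -/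
open RealInnerProductSpace

private lemma sq2 {W : Type*} [NormedAddCommGroup W] (a b : W) :
    ‖a + b‖ ^ 2 ≤ 2 * ‖a‖ ^ 2 + 2 * ‖b‖ ^ 2 := by
  have h := norm_add_le a b
  nlinarith [sq_nonneg (‖a‖ - ‖b‖), norm_nonneg a, norm_nonneg b, norm_nonneg (a + b)]

/-- The smoothed gap centered at `ż` bounds from below the smoothed gap with doubled
parameter centered at the projection `z*` of `ż` onto the saddle set:
`G_β(z, ż) ≥ G_{2β}(z, z*) - β dist_V(ż, Z*)²`. -/
theorem stmt10
    {X Y : Type*} [NormedAddCommGroup X] [InnerProductSpace ℝ X] [CompleteSpace X]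
    [NormedAddCommGroup Y] [InnerProductSpace ℝ Y] [CompleteSpace Y]
    (L : X → Y → ℝ) (τ σ β : ℝ) (hτ : 0 < τ) (hσ : 0 < σ) (hβ : 0 ≤ β)
    (hconv : ∀ y, ConvexOn ℝ Set.univ (fun x => L x y))
    (hconc : ∀ x, ConcaveOn ℝ Set.univ (fun y => L x y))
    (Zstar : Set (X × Y))
    (hZ : Zstar = {z | ∀ (x : X) (y : Y), L z.1 y ≤ L z.1 z.2 ∧ L z.1 z.2 ≤ L x z.2})
    (hne : Zstar.Nonempty) (hcl : IsClosed Zstar) (hcv : Convex ℝ Zstar)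
    (z zdot zstar : X × Y) (hzs : zstar ∈ Zstar)
    (hproj : ∀ w ∈ Zstar,
      (1 / τ) * ‖zdot.1 - zstar.1‖ ^ 2 + (1 / σ) * ‖zdot.2 - zstar.2‖ ^ 2 ≤
        (1 / τ) * ‖zdot.1 - w.1‖ ^ 2 + (1 / σ) * ‖zdot.2 - w.2‖ ^ 2)
    (G1 G2 : ℝ)
    (hG1 : IsLUB {v | ∃ (x' : X) (y' : Y), v = L z.1 y' - L x' z.2 -
      β / 2 * ((1 / τ) * ‖zdot.1 - x'‖ ^ 2 + (1 / σ) * ‖zdot.2 - y'‖ ^ 2)} G1)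
    (hG2 : IsLUB {v | ∃ (x' : X) (y' : Y), v = L z.1 y' - L x' z.2 -
      (2 * β) / 2 * ((1 / τ) * ‖zstar.1 - x'‖ ^ 2 + (1 / σ) * ‖zstar.2 - y'‖ ^ 2)} G2) :
    G2 - β * ((1 / τ) * ‖zdot.1 - zstar.1‖ ^ 2 + (1 / σ) * ‖zdot.2 - zstar.2‖ ^ 2) ≤ G1 := by

  set d := (1 / τ) * ‖zdot.1 - zstar.1‖ ^ 2 + (1 / σ) * ‖zdot.2 - zstar.2‖ ^ 2 with hd
  have key : ∀ v ∈ {v | ∃ (x' : X) (y' : Y), v = L z.1 y' - L x' z.2 -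
      (2 * β) / 2 * ((1 / τ) * ‖zstar.1 - x'‖ ^ 2 + (1 / σ) * ‖zstar.2 - y'‖ ^ 2)},
      v ≤ G1 + β * d := by
    rintro v ⟨x', y', rfl⟩
    have h1 : L z.1 y' - L x' z.2 -
        β / 2 * ((1 / τ) * ‖zdot.1 - x'‖ ^ 2 + (1 / σ) * ‖zdot.2 - y'‖ ^ 2) ≤ G1 :=
      hG1.1 ⟨x', y', rfl⟩
    have hx : ‖zdot.1 - x'‖ ^ 2 ≤ 2 * ‖zdot.1 - zstar.1‖ ^ 2 + 2 * ‖zstar.1 - x'‖ ^ 2 := by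
      have := sq2 (zdot.1 - zstar.1) (zstar.1 - x')
      simpa [sub_add_sub_cancel] using this
    have hy : ‖zdot.2 - y'‖ ^ 2 ≤ 2 * ‖zdot.2 - zstar.2‖ ^ 2 + 2 * ‖zstar.2 - y'‖ ^ 2 := by
      have := sq2 (zdot.2 - zstar.2) (zstar.2 - y')
      simpa [sub_add_sub_cancel] using this
    have hτ' : 0 ≤ 1 / τ := by positivity
    have hσ' : 0 ≤ 1 / σ := by positivity
    nlinarith [mul_le_mul_of_nonneg_left hx hτ', mul_le_mul_of_nonneg_left hy hσ',
      mul_le_mul_of_nonneg_left (add_le_add (mul_le_mul_of_nonneg_left hx hτ')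
        (mul_le_mul_of_nonneg_left hy hσ')) hβ]
  have := hG2.2 key
  linarith
end

section
/- Let β > 0 and suppose the map Φ_z : z' ↦ L(x, y') - L(x', y) - (β/2)‖z - z'‖_V² has a maximizer z*_β(z) for each z. If G_β(z, z) := sup Φ_z = 0, then z is a saddle point of L. Conversely if z is a saddle point then G_β(z, z) = 0. -/
open RealInnerProductSpace

private lemma aux_concave_max {E : Type*} [NormedAddCommGroup E] [NormedSpace ℝ E]
    (f : E → ℝ) (hf : ConcaveOn ℝ Set.univ f) (a : E) (K : ℝ)
    (hb : ∀ b : E, f b - f a - K * ‖a - b‖ ^ 2 ≤ 0) (b : E) : f b ≤ f a := by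
  by_contra h
  push_neg at h
  set c := f b - f a with hc
  have hc0 : 0 < c := sub_pos.mpr h
  set K' := K * ‖a - b‖ ^ 2 with hK'
  obtain ⟨t, ht0, ht1, htK⟩ : ∃ t : ℝ, 0 < t ∧ t ≤ 1 ∧ t * K' < c := by
    rcases le_or_gt K' 0 with h' | h'
    · exact ⟨1, one_pos, le_refl _, by nlinarith⟩
    · refine ⟨min 1 (c / (2 * K')), lt_min one_pos (by positivity), min_le_left _ _, ?_⟩
      calc min 1 (c / (2 * K')) * K' ≤ (c / (2 * K')) * K' :=
            mul_le_mul_of_nonneg_right (min_le_right _ _) h'.le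
        _ = c / 2 := by field_simp
        _ < c := by linarith
  have hcomb := hf.2 (Set.mem_univ b) (Set.mem_univ a) ht0.le
    (by linarith : (0:ℝ) ≤ 1 - t) (by ring)
  have hbd := hb (t • b + (1 - t) • a)
  have hnorm : ‖a - (t • b + (1 - t) • a)‖ = t * ‖a - b‖ := by
    have h1 : a - (t • b + (1 - t) • a) = t • (a - b) := by module
    rw [h1, norm_smul, Real.norm_of_nonneg ht0.le]
  rw [hnorm] at hbd
  have hmul := mul_lt_mul_of_pos_left htK ht0
  simp only [smul_eq_mul] at hcomb
  rw [hK'] at hmul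
  nlinarith [hcomb, hbd, hmul]

/-- For `β > 0`, the self-centered smoothed gap (attained at a maximizer `m` of
`Φ_z`) vanishes at `z` if and only if `z` is a saddle point of `L`. -/
theorem stmt12
    {X Y : Type*} [NormedAddCommGroup X] [InnerProductSpace ℝ X] [CompleteSpace X]
    [NormedAddCommGroup Y] [InnerProductSpace ℝ Y] [CompleteSpace Y]
    (L : X → Y → ℝ) (τ σ β : ℝ) (hτ : 0 < τ) (hσ : 0 < σ) (hβ : 0 < β)
    (hconv : ∀ y, ConvexOn ℝ Set.univ (fun x => L x y))
    (hconc : ∀ x, ConcaveOn ℝ Set.univ (fun y => L x y))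
    (z m : X × Y)
    (hm : IsMaxOn (fun z' : X × Y => L z.1 z'.2 - L z'.1 z.2 -
      β / 2 * ((1 / τ) * ‖z.1 - z'.1‖ ^ 2 + (1 / σ) * ‖z.2 - z'.2‖ ^ 2))
      Set.univ m) :
    (L z.1 m.2 - L m.1 z.2 -
        β / 2 * ((1 / τ) * ‖z.1 - m.1‖ ^ 2 + (1 / σ) * ‖z.2 - m.2‖ ^ 2) = 0 →
      ∀ (x : X) (y : Y), L z.1 y ≤ L z.1 z.2 ∧ L z.1 z.2 ≤ L x z.2) ∧
    ((∀ (x : X) (y : Y), L z.1 y ≤ L z.1 z.2 ∧ L z.1 z.2 ≤ L x z.2) →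
      L z.1 m.2 - L m.1 z.2 -
        β / 2 * ((1 / τ) * ‖z.1 - m.1‖ ^ 2 + (1 / σ) * ‖z.2 - m.2‖ ^ 2) = 0) := by
  constructor
  · intro hval x y
    have hΦ : ∀ z' : X × Y, L z.1 z'.2 - L z'.1 z.2 -
        β / 2 * ((1 / τ) * ‖z.1 - z'.1‖ ^ 2 + (1 / σ) * ‖z.2 - z'.2‖ ^ 2) ≤ 0 := by
      intro z'
      have := hm (Set.mem_univ z')
      simp only at this
      linarith [this.trans_eq hval]
    constructor
    · apply aux_concave_max (fun y => L z.1 y) (hconc z.1) z.2 (β / 2 * (1 / σ))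
      intro b
      have := hΦ (z.1, b)
      simp only [sub_self, norm_zero] at this
      nlinarith [this]
    · have := aux_concave_max (fun x => -L x z.2) (hconv z.2).neg z.1 (β / 2 * (1 / τ))
        (fun b => by
          have := hΦ (b, z.2)
          simp only [sub_self, norm_zero] at this
          nlinarith [this]) x
      linarith [this]
  · intro hsad
    have h0 : (0:ℝ) ≤ L z.1 m.2 - L m.1 z.2 -
        β / 2 * ((1 / τ) * ‖z.1 - m.1‖ ^ 2 + (1 / σ) * ‖z.2 - m.2‖ ^ 2) := by
      have := hm (Set.mem_univ z)
      simp only [Set.mem_setOf_eq, sub_self, norm_zero] at this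
      have h2 : (β / 2 * ((1 / τ) * (0:ℝ) ^ 2 + (1 / σ) * 0 ^ 2)) = 0 := by ring
      nlinarith [this]
    have h1 := (hsad m.1 m.2).1
    have h2 := (hsad m.1 m.2).2
    have hq : 0 ≤ β / 2 * ((1 / τ) * ‖z.1 - m.1‖ ^ 2 + (1 / σ) * ‖z.2 - m.2‖ ^ 2) := by
      positivity
    linarith
end

section
/- Suppose for z* = P_{Z*}(z) the smoothed gap satisfies G_β(z, z*) ≥ (η/2) dist_V(z, Z*)². Then with β' = min(β/2, η/4), the self-centered smoothed gap satisfies G_{β'}(z, z) ≥ (η/4) dist_V(z, Z*)². -/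
open RealInnerProductSpace

set_option maxHeartbeats 1000000 in
/-- If the smoothed gap centered at `z* = P_{Z*}(z)` has a quadratic error bound
`G_β(z, z*) ≥ (η/2) dist_V(z, Z*)²`, then with `β' = min(β/2, η/4)` the
self-centered smoothed gap satisfies `G_{β'}(z, z) ≥ (η/4) dist_V(z, Z*)²`. -/
theorem stmt13
    {X Y : Type*} [NormedAddCommGroup X] [InnerProductSpace ℝ X] [CompleteSpace X]
    [NormedAddCommGroup Y] [InnerProductSpace ℝ Y] [CompleteSpace Y]
    (L : X → Y → ℝ) (τ σ β η : ℝ) (hτ : 0 < τ) (hσ : 0 < σ) (hβ : 0 < β) (hη : 0 < η)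
    (Zstar : Set (X × Y))
    (hZ : Zstar = {w | ∀ (x : X) (y : Y), L w.1 y ≤ L w.1 w.2 ∧ L w.1 w.2 ≤ L x w.2})
    (hne : Zstar.Nonempty) (hcl : IsClosed Zstar) (hcv : Convex ℝ Zstar)
    (z zstar : X × Y) (hzs : zstar ∈ Zstar)
    (hproj : ∀ w ∈ Zstar,
      (1 / τ) * ‖z.1 - zstar.1‖ ^ 2 + (1 / σ) * ‖z.2 - zstar.2‖ ^ 2 ≤
        (1 / τ) * ‖z.1 - w.1‖ ^ 2 + (1 / σ) * ‖z.2 - w.2‖ ^ 2)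
    (G : ℝ → X × Y → X × Y → ℝ)
    (hG : ∀ (b : ℝ) (zz zdot : X × Y),
      IsLUB {v | ∃ (x' : X) (y' : Y), v = L zz.1 y' - L x' zz.2 -
        b / 2 * ((1 / τ) * ‖zdot.1 - x'‖ ^ 2 + (1 / σ) * ‖zdot.2 - y'‖ ^ 2)}
        (G b zz zdot))
    (hqeb : η / 2 * ((1 / τ) * ‖z.1 - zstar.1‖ ^ 2 + (1 / σ) * ‖z.2 - zstar.2‖ ^ 2) ≤
      G β z zstar) :
    η / 4 * ((1 / τ) * ‖z.1 - zstar.1‖ ^ 2 + (1 / σ) * ‖z.2 - zstar.2‖ ^ 2) ≤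
      G (min (β / 2) (η / 4)) z z := by

  set β' := min (β / 2) (η / 4) with hβ'
  set d2 := (1 / τ) * ‖z.1 - zstar.1‖ ^ 2 + (1 / σ) * ‖z.2 - zstar.2‖ ^ 2 with hd2
  have hτ' : (0:ℝ) < 1 / τ := by positivity
  have hσ' : (0:ℝ) < 1 / σ := by positivity
  have hd2nn : 0 ≤ d2 := by positivity
  have hβ'1 : β' ≤ β / 2 := min_le_left _ _
  have hβ'2 : β' ≤ η / 4 := min_le_right _ _
  have hβ'pos : 0 < β' := lt_min (by linarith) (by linarith)
  -- key: G β z zstar ≤ G β' z z + (η/4) * d2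
  have key : G β z zstar ≤ G β' z z + η / 4 * d2 := by
    apply (hG β z zstar).2
    rintro v ⟨x', y', rfl⟩
    have hmem : L z.1 y' - L x' z.2 -
        β' / 2 * ((1 / τ) * ‖z.1 - x'‖ ^ 2 + (1 / σ) * ‖z.2 - y'‖ ^ 2)
        ∈ {v | ∃ (x'' : X) (y'' : Y), v = L z.1 y'' - L x'' z.2 -
          β' / 2 * ((1 / τ) * ‖z.1 - x''‖ ^ 2 + (1 / σ) * ‖z.2 - y''‖ ^ 2)} :=
      ⟨x', y', rfl⟩
    have hub := (hG β' z z).1 hmem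
    -- componentwise triangle + squaring
    have h1 : ‖z.1 - x'‖ ^ 2 ≤ 2 * ‖z.1 - zstar.1‖ ^ 2 + 2 * ‖zstar.1 - x'‖ ^ 2 := by
      have ht : ‖z.1 - x'‖ ≤ ‖z.1 - zstar.1‖ + ‖zstar.1 - x'‖ := by
        have := norm_add_le (z.1 - zstar.1) (zstar.1 - x')
        simpa using this
      nlinarith [norm_nonneg (z.1 - x'), norm_nonneg (z.1 - zstar.1), norm_nonneg (zstar.1 - x'),
        sq_nonneg (‖z.1 - zstar.1‖ - ‖zstar.1 - x'‖)]
    have h2 : ‖z.2 - y'‖ ^ 2 ≤ 2 * ‖z.2 - zstar.2‖ ^ 2 + 2 * ‖zstar.2 - y'‖ ^ 2 := by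
      have ht : ‖z.2 - y'‖ ≤ ‖z.2 - zstar.2‖ + ‖zstar.2 - y'‖ := by
        have := norm_add_le (z.2 - zstar.2) (zstar.2 - y')
        simpa using this
      nlinarith [norm_nonneg (z.2 - y'), norm_nonneg (z.2 - zstar.2), norm_nonneg (zstar.2 - y'),
        sq_nonneg (‖z.2 - zstar.2‖ - ‖zstar.2 - y'‖)]
    set c := (1 / τ) * ‖zstar.1 - x'‖ ^ 2 + (1 / σ) * ‖zstar.2 - y'‖ ^ 2 with hc
    have hcnn : 0 ≤ c := by positivity
    have e1 : (1 / τ) * ‖z.1 - x'‖ ^ 2 + (1 / σ) * ‖z.2 - y'‖ ^ 2 ≤ 2 * d2 + 2 * c := by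
      rw [hd2, hc]
      nlinarith [mul_le_mul_of_nonneg_left h1 hτ'.le, mul_le_mul_of_nonneg_left h2 hσ'.le]
    have hcmp : β' / 2 * ((1 / τ) * ‖z.1 - x'‖ ^ 2 + (1 / σ) * ‖z.2 - y'‖ ^ 2) ≤
        β / 2 * c + η / 4 * d2 :=
      calc β' / 2 * ((1 / τ) * ‖z.1 - x'‖ ^ 2 + (1 / σ) * ‖z.2 - y'‖ ^ 2)
          ≤ β' / 2 * (2 * d2 + 2 * c) := mul_le_mul_of_nonneg_left e1 (by positivity)
        _ = β' * d2 + β' * c := by ring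
        _ ≤ η / 4 * d2 + β / 2 * c := add_le_add
            (mul_le_mul_of_nonneg_right hβ'2 hd2nn)
            (mul_le_mul_of_nonneg_right hβ'1 hcnn)
        _ = β / 2 * c + η / 4 * d2 := by ring
    linarith
  linarith
end

section
/- Consider the 1D problem min_{x ∈ ℝ} { (μ/2)x² : ax = b } with a ≠ 0, μ ≥ 0, Lagrangian L(x,y) = (μ/2)x² + y(ax - b), unique saddle point (x*, y*), and dual norm ‖(u,v)‖_{V*}² = τ‖u‖² + σ‖v‖². Then for all (x,y) ∈ ℝ², ‖∇L(x,y)‖_{V*}² ≥ ((√(μ²τ² + 4στa²) - μτ)/2)² · ‖(x,y) - (x*,y*)‖_V², where ∇L(x,y) = (μx + ay, ax - b) and ‖(x,y)‖_V² = (1/τ)x² + (1/σ)y². -/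
lemma stmt14_aux (a μ τ σ c u v : ℝ) (hμ : 0 ≤ μ) (hτ : 0 < τ) (hσ : 0 < σ)
    (hc0 : 0 ≤ c) (hkey : c ^ 2 + μ * τ * c = σ * τ * a ^ 2) :
    c ^ 2 * (1 / τ * u ^ 2 + 1 / σ * v ^ 2) ≤ τ * (μ * u + a * v) ^ 2 + σ * (a * u) ^ 2 := by
  rw [show (1/τ * u^2 + 1/σ * v^2) = (σ*u^2 + τ*v^2)/(τ*σ) by field_simp,
    ← mul_div_assoc, div_le_iff₀ (by positivity)]
  rcases eq_or_lt_of_le hμ with h | h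
  · subst h
    have : c^2*(σ*u^2+τ*v^2) = (τ*(0*u+a*v)^2 + σ*(a*u)^2)*(τ*σ) := by
      linear_combination (σ*u^2+τ*v^2)*hkey
    linarith
  · have hA : 0 < σ * (τ * μ + c) := by positivity
    
    have hE : σ * (τ*μ+c) * ((τ*(μ*u+a*v)^2 + σ*(a*u)^2)*(τ*σ) - c^2*(σ*u^2+τ*v^2))
        = μ*τ*(σ*(τ*μ+c)*u + τ*σ*a*v)^2 := by
      linear_combination (μ*τ*σ*τ*v^2 - σ*(τ*μ+c)*(σ*u^2+τ*v^2)) * hkey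
    nlinarith [hE, mul_nonneg (mul_nonneg h.le hτ.le) (sq_nonneg (σ*(τ*μ+c)*u + τ*σ*a*v)), hA]

/-- Metric subregularity constant for the toy 1D problem
`min { (μ/2)x² : ax = b }`: for all `(x,y)`,
`‖∇L(x,y)‖_{V*}² ≥ ((√(μ²τ² + 4στa²) - μτ)/2)² ‖z - z*‖_V²`. -/
theorem stmt14
    (a b μ τ σ : ℝ) (ha : a ≠ 0) (hμ : 0 ≤ μ) (hτ : 0 < τ) (hσ : 0 < σ)
    (xstar ystar : ℝ) (hopt : μ * xstar + a * ystar = 0) (hfeas : a * xstar = b) :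
    ∀ x y : ℝ,
      ((Real.sqrt (μ ^ 2 * τ ^ 2 + 4 * σ * τ * a ^ 2) - μ * τ) / 2) ^ 2 *
          ((1 / τ) * (x - xstar) ^ 2 + (1 / σ) * (y - ystar) ^ 2) ≤
        τ * (μ * x + a * y) ^ 2 + σ * (a * x - b) ^ 2 := by
  intro x y
  set s := Real.sqrt (μ ^ 2 * τ ^ 2 + 4 * σ * τ * a ^ 2) with hsdef
  have hs2 : s ^ 2 = μ ^ 2 * τ ^ 2 + 4 * σ * τ * a ^ 2 := Real.sq_sqrt (by positivity)
  have hkey : ((s - μ * τ) / 2) ^ 2 + μ * τ * ((s - μ * τ) / 2) = σ * τ * a ^ 2 := by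
    nlinarith [hs2]
  have h1 : μ * x + a * y = μ * (x - xstar) + a * (y - ystar) := by linarith
  have h2 : a * x - b = a * (x - xstar) := by linarith
  rw [h1, h2]
  refine stmt14_aux a μ τ σ _ (x - xstar) (y - ystar) hμ hτ hσ ?_ hkey
  have hs0 : 0 ≤ s := Real.sqrt_nonneg _
  have ha2 : 0 < a ^ 2 := by positivity
  nlinarith [hs2, mul_nonneg hμ hτ.le, mul_pos (mul_pos hσ hτ) ha2]
end

section
/- Consider the 1D problem min_{x} { (μ/2)x² : ax = b } with saddle point z* = (x*, y*), Lagrangian L(x,y) = (μ/2)x² + y(ax - b), and smoothed gap G_β(z̄, z*) = sup_y [(μ/2)x̄² + y(ax̄ - b) - (β_y/(2σ))(y - y*)²] + sup_x [-(μ/2)x² - ȳ(ax - b) - (β_x/(2τ))(x - x*)²]. Then G_β(z̄, z*) ≥ (1/2) min( μτ + στa²/β_y, στa²/(β_x + μτ) ) · ‖z̄ - z*‖_V². -/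
/-- Quadratic error bound of the smoothed gap for the toy 1D problem
`min { (μ/2)x² : ax = b }`:
`G_β(z̄, z*) ≥ (1/2) min(μτ + στa²/β_y, στa²/(β_x + μτ)) ‖z̄ - z*‖_V²`. -/
theorem stmt15
    (a b μ τ σ βx βy : ℝ) (ha : a ≠ 0) (hμ : 0 ≤ μ) (hτ : 0 < τ) (hσ : 0 < σ)
    (hβx : 0 < βx) (hβy : 0 < βy)
    (xstar ystar : ℝ) (hopt : μ * xstar + a * ystar = 0) (hfeas : a * xstar = b)
    (xb yb : ℝ) (S1 S2 : ℝ)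
    (hS1 : IsLUB {v | ∃ y : ℝ,
      v = μ / 2 * xb ^ 2 + y * (a * xb - b) - βy / (2 * σ) * (y - ystar) ^ 2} S1)
    (hS2 : IsLUB {v | ∃ x : ℝ,
      v = -(μ / 2 * x ^ 2) - yb * (a * x - b) - βx / (2 * τ) * (x - xstar) ^ 2} S2) :
    1 / 2 * min (μ * τ + σ * τ * a ^ 2 / βy) (σ * τ * a ^ 2 / (βx + μ * τ)) *
        ((1 / τ) * (xb - xstar) ^ 2 + (1 / σ) * (yb - ystar) ^ 2) ≤ S1 + S2 := by
  have hK : 0 < βx + μ * τ := by positivity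
  have hτ' : τ ≠ 0 := ne_of_gt hτ
  have hσ' : σ ≠ 0 := ne_of_gt hσ
  have hβy' : βy ≠ 0 := ne_of_gt hβy
  have hK' : βx + μ * τ ≠ 0 := ne_of_gt hK
  have h1 : μ / 2 * xb ^ 2 + (ystar + σ * (a * xb - b) / βy) * (a * xb - b)
      - βy / (2 * σ) * ((ystar + σ * (a * xb - b) / βy) - ystar) ^ 2 ≤ S1 :=
    hS1.1 ⟨_, rfl⟩
  have h2 : -(μ / 2 * (xstar - a * (yb - ystar) * τ / (βx + μ * τ)) ^ 2)
      - yb * (a * (xstar - a * (yb - ystar) * τ / (βx + μ * τ)) - b)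
      - βx / (2 * τ) * ((xstar - a * (yb - ystar) * τ / (βx + μ * τ)) - xstar) ^ 2 ≤ S2 :=
    hS2.1 ⟨_, rfl⟩
  have hb : b = a * xstar := hfeas.symm
  subst hb
  have e1 : μ / 2 * xb ^ 2 + (ystar + σ * (a * xb - a * xstar) / βy) * (a * xb - a * xstar)
      - βy / (2 * σ) * ((ystar + σ * (a * xb - a * xstar) / βy) - ystar) ^ 2
      = μ / 2 * xstar ^ 2 + μ / 2 * (xb - xstar) ^ 2
        + σ * a ^ 2 * (xb - xstar) ^ 2 / (2 * βy) := by
    field_simp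
    linear_combination (2*βy*σ*(xb-xstar)) * hopt
  have e2 : -(μ / 2 * (xstar - a * (yb - ystar) * τ / (βx + μ * τ)) ^ 2)
      - yb * (a * (xstar - a * (yb - ystar) * τ / (βx + μ * τ)) - a * xstar)
      - βx / (2 * τ) * ((xstar - a * (yb - ystar) * τ / (βx + μ * τ)) - xstar) ^ 2
      = -(μ / 2 * xstar ^ 2) + τ * a ^ 2 * (yb - ystar) ^ 2 / (2 * (βx + μ * τ)) := by
    field_simp
    linear_combination (2*τ^2*a*(yb-ystar)*(βx+μ*τ)) * hopt
  rw [e1] at h1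
  rw [e2] at h2
  have hu : (0:ℝ) ≤ (1 / τ) * (xb - xstar) ^ 2 := by positivity
  have hv : (0:ℝ) ≤ (1 / σ) * (yb - ystar) ^ 2 := by positivity
  have hA : min (μ * τ + σ * τ * a ^ 2 / βy) (σ * τ * a ^ 2 / (βx + μ * τ)) *
      ((1 / τ) * (xb - xstar) ^ 2)
      ≤ (μ * τ + σ * τ * a ^ 2 / βy) * ((1 / τ) * (xb - xstar) ^ 2) :=
    mul_le_mul_of_nonneg_right (min_le_left _ _) hu
  have hB : min (μ * τ + σ * τ * a ^ 2 / βy) (σ * τ * a ^ 2 / (βx + μ * τ)) *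
      ((1 / σ) * (yb - ystar) ^ 2)
      ≤ (σ * τ * a ^ 2 / (βx + μ * τ)) * ((1 / σ) * (yb - ystar) ^ 2) :=
    mul_le_mul_of_nonneg_right (min_le_right _ _) hv
  have eA : (μ * τ + σ * τ * a ^ 2 / βy) * ((1 / τ) * (xb - xstar) ^ 2)
      = μ * (xb - xstar) ^ 2 + σ * a ^ 2 * (xb - xstar) ^ 2 / βy := by
    field_simp
  have eB : (σ * τ * a ^ 2 / (βx + μ * τ)) * ((1 / σ) * (yb - ystar) ^ 2)
      = τ * a ^ 2 * (yb - ystar) ^ 2 / (βx + μ * τ) := by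
    field_simp
  rw [eA] at hA
  rw [eB] at hB
  have r1 : σ * a ^ 2 * (xb - xstar) ^ 2 / (2 * βy)
      = (σ * a ^ 2 * (xb - xstar) ^ 2 / βy) / 2 := by rw [div_div, mul_comm βy 2]
  have r2 : τ * a ^ 2 * (yb - ystar) ^ 2 / (2 * (βx + μ * τ))
      = (τ * a ^ 2 * (yb - ystar) ^ 2 / (βx + μ * τ)) / 2 := by rw [div_div, mul_comm (βx + μ * τ) 2]
  rw [r1] at h1
  rw [r2] at h2
  linarith [h1, h2, hA, hB]
end

section
/- Let f + f₂ be μ_f-strongly convex with (L_f + L_f')-Lipschitz gradient on ℝⁿ, and consider L(x,y) = f(x) + f₂(x) + ⟨Ax - b, y⟩ with saddle point (x*, y*) where Ax* = b and ∇(f+f₂)(x*) = -A^⊤y*. Then for all y, sup_{x'} [-L(x', y) - (β_x/(2τ))‖x' - x*‖²] ≥ -L(x*, y*) + (1/(2(L_f + L_f' + β_x/τ))) ‖A^⊤(y - y*)‖². -/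
open RealInnerProductSpace intervalIntegral

lemma descent_lemma {X : Type*} [NormedAddCommGroup X] [InnerProductSpace ℝ X] [CompleteSpace X]
    (F : X → ℝ) (g : X → X) (L : ℝ) (hL : 0 ≤ L)
    (hg : ∀ x, HasGradientAt F (g x) x)
    (hlip : LipschitzWith (Real.toNNReal L) g)
    (x d : X) : F (x + d) ≤ F x + ⟪g x, d⟫ + L / 2 * ‖d‖ ^ 2 := by
  have hφ : ∀ t : ℝ, HasDerivAt (fun s : ℝ => F (x + s • d)) ⟪g (x + t • d), d⟫ t := by
    intro t
    have hline : HasDerivAt (fun s : ℝ => x + s • d) d t := by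
      simpa using ((hasDerivAt_id t).smul_const d).const_add x
    have := ((hg (x + t • d)).hasFDerivAt).comp_hasDerivAt t hline
    simpa [InnerProductSpace.toDual_apply_apply, Function.comp_def] using this
  have hcont : Continuous fun t : ℝ => ⟪g (x + t • d), d⟫ := by
    apply Continuous.inner _ continuous_const
    exact hlip.continuous.comp (by continuity)
  have hFTC : F (x + d) - F x = ∫ t in (0:ℝ)..1, ⟪g (x + t • d), d⟫ := by
    have := integral_eq_sub_of_hasDerivAt (f := fun s : ℝ => F (x + s • d))
      (f' := fun t => ⟪g (x + t • d), d⟫) (a := 0) (b := 1)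
      (fun t _ => hφ t) (hcont.intervalIntegrable 0 1)
    simpa using this.symm
  have hptwise : ∀ t ∈ Set.Icc (0:ℝ) 1,
      ⟪g (x + t • d), d⟫ ≤ ⟪g x, d⟫ + L * ‖d‖ ^ 2 * t := by
    intro t ht
    have h1 : ⟪g (x + t • d) - g x, d⟫ ≤ ‖g (x + t • d) - g x‖ * ‖d‖ :=
      real_inner_le_norm _ _
    have h2 : ‖g (x + t • d) - g x‖ ≤ L * (t * ‖d‖) := by
      have := hlip.dist_le_mul (x + t • d) x
      rw [Real.coe_toNNReal _ hL] at this
      calc ‖g (x + t • d) - g x‖ = dist (g (x + t • d)) (g x) := (dist_eq_norm _ _).symm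
        _ ≤ L * dist (x + t • d) x := this
        _ = L * (t * ‖d‖) := by
            rw [dist_eq_norm]
            simp [norm_smul, abs_of_nonneg ht.1]
    have h3 : ‖g (x + t • d) - g x‖ * ‖d‖ ≤ L * (t * ‖d‖) * ‖d‖ :=
      mul_le_mul_of_nonneg_right h2 (norm_nonneg d)
    have h4 : ⟪g (x + t • d), d⟫ - ⟪g x, d⟫ = ⟪g (x + t • d) - g x, d⟫ := by
      rw [inner_sub_left]
    nlinarith [sq_nonneg ‖d‖]
  have hint : ∫ t in (0:ℝ)..1, ⟪g (x + t • d), d⟫ ≤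
      ∫ t in (0:ℝ)..1, (⟪g x, d⟫ + L * ‖d‖ ^ 2 * t) := by
    apply intervalIntegral.integral_mono_on (by norm_num)
      (hcont.intervalIntegrable 0 1)
      ((continuous_const.add (continuous_const.mul continuous_id)).intervalIntegrable 0 1)
    intro t ht
    exact hptwise t ht
  have hval : ∫ t in (0:ℝ)..1, (⟪g x, d⟫ + L * ‖d‖ ^ 2 * t) =
      ⟪g x, d⟫ + L / 2 * ‖d‖ ^ 2 := by
    have : (fun t : ℝ => ⟪g x, d⟫ + L * ‖d‖ ^ 2 * t) =
        fun t : ℝ => ⟪g x, d⟫ + L * ‖d‖ ^ 2 * id t := rfl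
    rw [this, intervalIntegral.integral_add (intervalIntegrable_const)
      (f := fun _ => ⟪g x, d⟫) (g := fun t : ℝ => L * ‖d‖ ^ 2 * id t)
      ((continuous_const.mul continuous_id).intervalIntegrable 0 1),
      intervalIntegral.integral_const_mul]
    simp [integral_id]
    ring
  linarith [hFTC, hint, hval.le, hval.ge]

/-- Dual smoothed gap lower bound for a smooth strongly convex objective under
linear equality constraints:
`sup_{x'} [-L(x', y) - (β_x/(2τ))‖x' - x*‖²] ≥ -L(x*, y*) + ‖A^⊤(y - y*)‖²/(2(L_f + L_f' + β_x/τ))`. -/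
theorem stmt16
    {X Y : Type*} [NormedAddCommGroup X] [InnerProductSpace ℝ X] [CompleteSpace X]
    [NormedAddCommGroup Y] [InnerProductSpace ℝ Y] [CompleteSpace Y]
    (f f2 : X → ℝ) (A : X →L[ℝ] Y) (b : Y)
    (μf Lf Lf' βx τ : ℝ) (hμ : 0 < μf) (hLf : 0 ≤ Lf) (hLf' : 0 ≤ Lf')
    (hβx : 0 < βx) (hτ : 0 < τ)
    (gradh : X → X)
    (hgrad : ∀ x : X, HasGradientAt (fun u => f u + f2 u) (gradh x) x)
    (hsc : ConvexOn ℝ Set.univ (fun x => f x + f2 x - μf / 2 * ‖x‖ ^ 2))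
    (hlip : LipschitzWith (Real.toNNReal (Lf + Lf')) gradh)
    (xstar : X) (ystar : Y)
    (hfeas : A xstar = b)
    (hopt : gradh xstar = -(ContinuousLinearMap.adjoint A ystar)) :
    ∀ (y : Y) (S : ℝ),
      IsLUB {v | ∃ x' : X,
        v = -(f x' + f2 x' + ⟪A x' - b, y⟫) - βx / (2 * τ) * ‖x' - xstar‖ ^ 2} S →
      -(f xstar + f2 xstar + ⟪A xstar - b, ystar⟫) +
          1 / (2 * (Lf + Lf' + βx / τ)) *
            ‖ContinuousLinearMap.adjoint A (y - ystar)‖ ^ 2 ≤ S := by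
  intro y S hS
  set M : ℝ := Lf + Lf' + βx / τ with hMdef
  have hM : 0 < M := by positivity
  set g : X := ContinuousLinearMap.adjoint A (y - ystar) with hgdef
  set d : X := -((1 / M) • g) with hddef
  have hdesc : f (xstar + d) + f2 (xstar + d) ≤
      f xstar + f2 xstar + ⟪gradh xstar, d⟫ + (Lf + Lf') / 2 * ‖d‖ ^ 2 :=
    descent_lemma (fun u => f u + f2 u) gradh (Lf + Lf') (by positivity) hgrad hlip xstar d
  have hmem : (-(f (xstar + d) + f2 (xstar + d) + ⟪A (xstar + d) - b, y⟫)
      - βx / (2 * τ) * ‖(xstar + d) - xstar‖ ^ 2) ∈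
      {v | ∃ x' : X,
        v = -(f x' + f2 x' + ⟪A x' - b, y⟫) - βx / (2 * τ) * ‖x' - xstar‖ ^ 2} :=
    ⟨xstar + d, rfl⟩
  have hSv := hS.1 hmem
  have hxd : xstar + d - xstar = d := add_sub_cancel_left xstar d
  have hAd : A (xstar + d) - b = A d := by rw [map_add, hfeas]; abel
  have hinner1 : ⟪A d, y⟫ = ⟪(ContinuousLinearMap.adjoint A) y, d⟫ := by
    rw [ContinuousLinearMap.adjoint_inner_left, real_inner_comm]
  have hgd : ⟪(ContinuousLinearMap.adjoint A) y, d⟫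
      - ⟪(ContinuousLinearMap.adjoint A) ystar, d⟫ = ⟪g, d⟫ := by
    rw [hgdef, map_sub, inner_sub_left]
  have h1 : ⟪g, d⟫ = -(1 / M) * ‖g‖ ^ 2 := by
    rw [hddef, inner_neg_right, real_inner_smul_right, real_inner_self_eq_norm_sq]
    ring
  have h2 : ‖d‖ ^ 2 = (1 / M) ^ 2 * ‖g‖ ^ 2 := by
    rw [hddef, norm_neg, norm_smul]
    rw [Real.norm_eq_abs, abs_of_pos (by positivity)]
    ring
  have hzero : ⟪A xstar - b, ystar⟫ = (0 : ℝ) := by simp [hfeas]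
  have hgrad0 : ⟪gradh xstar, d⟫ = -⟪(ContinuousLinearMap.adjoint A) ystar, d⟫ := by
    rw [hopt, inner_neg_left]
  have hkey : 1 / (2 * M) * ‖g‖ ^ 2 =
      (1 / M) * ‖g‖ ^ 2 - M / 2 * ((1 / M) ^ 2 * ‖g‖ ^ 2) := by
    field_simp
    ring
  rw [hAd, hxd, hinner1] at hSv
  rw [hgrad0] at hdesc
  rw [hzero]
  have hMsplit : (Lf + Lf') / 2 * ‖d‖ ^ 2 + βx / (2 * τ) * ‖d‖ ^ 2 = M / 2 * ‖d‖ ^ 2 := by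
    rw [hMdef]; ring
  have h2' : M / 2 * ‖d‖ ^ 2 = M / 2 * ((1 / M) ^ 2 * ‖g‖ ^ 2) := by rw [h2]
  have hβ2' : βx / (2 * τ) * ‖d‖ ^ 2 = βx / (2 * τ) * ((1 / M) ^ 2 * ‖g‖ ^ 2) := by rw [h2]
  have hL2' : (Lf + Lf') / 2 * ‖d‖ ^ 2 = (Lf + Lf') / 2 * ((1 / M) ^ 2 * ‖g‖ ^ 2) := by rw [h2]
  linarith [hSv, hdesc, h1, hkey, hMsplit, hgd, h2', hβ2', hL2']
end

section
/- Let T be an operator on a Hilbert space Z with nonempty fixed point set Z* satisfying, for some λ > 0 and all z and all z* ∈ Z*, ‖T(z) - z*‖² ≤ ‖z - z*‖² - λ‖z - T(z)‖². Suppose moreover that I - T is metrically subregular with constant c > 0: ‖z - T(z)‖ ≥ c · dist(z, Z*) for all z. Then dist(T(z), Z*)² ≤ (1 - λc²) dist(z, Z*)² for all z, and the iterates z_{k+1} = T(z_k) converge linearly: dist(z_k, Z*)² ≤ (1 - λc²)^k dist(z_0, Z*)². -/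
/-- A quasi-contractive operator whose displacement `I - T` is metrically subregular
yields linear convergence of the distance to the fixed point set:
`dist(T z, Z*)² ≤ (1 - λ c²) dist(z, Z*)²` and
`dist(T^[k] z₀, Z*)² ≤ (1 - λ c²)^k dist(z₀, Z*)²`. -/
theorem stmt18
    {Z : Type*} [NormedAddCommGroup Z] [InnerProductSpace ℝ Z] [CompleteSpace Z]
    (T : Z → Z) (Zstar : Set Z)
    (hZ : Zstar = {z | T z = z}) (hne : Zstar.Nonempty) (hcl : IsClosed Zstar)
    (lam c : ℝ) (hlam0 : 0 < lam) (hlam1 : lam ≤ 1)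
    (hc0 : 0 < c) (hc1 : c ≤ 1 / Real.sqrt lam)
    (hfejer : ∀ z : Z, ∀ zstar ∈ Zstar,
      ‖T z - zstar‖ ^ 2 ≤ ‖z - zstar‖ ^ 2 - lam * ‖z - T z‖ ^ 2)
    (hmsr : ∀ z : Z, c * Metric.infDist z Zstar ≤ ‖z - T z‖)
    (hattain : ∀ z : Z, ∃ w ∈ Zstar, Metric.infDist z Zstar = ‖z - w‖) :
    (∀ z : Z, Metric.infDist (T z) Zstar ^ 2 ≤ (1 - lam * c ^ 2) * Metric.infDist z Zstar ^ 2) ∧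
    (∀ z0 : Z, ∀ k : ℕ,
      Metric.infDist (T^[k] z0) Zstar ^ 2 ≤
        (1 - lam * c ^ 2) ^ k * Metric.infDist z0 Zstar ^ 2) := by
  have hfac : 0 ≤ 1 - lam * c ^ 2 := by
    have hs : Real.sqrt lam > 0 := Real.sqrt_pos.mpr hlam0
    have : c * Real.sqrt lam ≤ 1 := by
      have := mul_le_mul_of_nonneg_right hc1 hs.le
      rwa [one_div, inv_mul_cancel₀ hs.ne'] at this
    have h2 : (c * Real.sqrt lam) ^ 2 ≤ 1 ^ 2 := by
      apply pow_le_pow_left₀ (by positivity) this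
    have hsq : Real.sqrt lam ^ 2 = lam := Real.sq_sqrt hlam0.le
    nlinarith
  have key : ∀ z : Z, Metric.infDist (T z) Zstar ^ 2 ≤
      (1 - lam * c ^ 2) * Metric.infDist z Zstar ^ 2 := by
    intro z
    obtain ⟨w, hw, hdw⟩ := hattain z
    have hle : Metric.infDist (T z) Zstar ≤ ‖T z - w‖ := by
      have := Metric.infDist_le_dist_of_mem (x := T z) hw
      rwa [dist_eq_norm] at this
    have h0 : 0 ≤ Metric.infDist (T z) Zstar := Metric.infDist_nonneg
    have h1 : Metric.infDist (T z) Zstar ^ 2 ≤ ‖T z - w‖ ^ 2 :=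
      pow_le_pow_left₀ h0 hle 2
    have h2 := hfejer z w hw
    have h3 := hmsr z
    have h4 : (c * Metric.infDist z Zstar) ^ 2 ≤ ‖z - T z‖ ^ 2 :=
      pow_le_pow_left₀ (mul_nonneg hc0.le Metric.infDist_nonneg) h3 2
    have h5 : Metric.infDist z Zstar ^ 2 = ‖z - w‖ ^ 2 := by rw [hdw]
    nlinarith
  refine ⟨key, fun z0 k => ?_⟩
  induction k with
  | zero => simp
  | succ n ih =>
    rw [Function.iterate_succ_apply']
    calc Metric.infDist (T (T^[n] z0)) Zstar ^ 2
        ≤ (1 - lam * c ^ 2) * Metric.infDist (T^[n] z0) Zstar ^ 2 := key _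
      _ ≤ (1 - lam * c ^ 2) * ((1 - lam * c ^ 2) ^ n * Metric.infDist z0 Zstar ^ 2) :=
          mul_le_mul_of_nonneg_left ih hfac
      _ = (1 - lam * c ^ 2) ^ (n + 1) * Metric.infDist z0 Zstar ^ 2 := by ring
end
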